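/- arXiv:2203.10618 — 7 statements merged into one kernel-verified Lean document; each statement's English description precedes it below -/
import Mathlib

section
/- Let X = {1,...,n} and A = {1,...,m} be finite totally ordered sets and φ : X × A → ℝ a function that is supermodular, i.e., φ(x',a') - φ(x',a) ≥ φ(x,a') - φ(x,a) for all x' > x and a' > a. Then the map x ↦ max {a ∈ A : φ(x,a) = max_{b} φ(x,b)} (the largest maximizer of φ(x,·)) is monotone nondecreasing in x. -/
/-- `a` is the largest maximizer of `f` over the action set `{1,...,m}`. -/
def IsLargestArgmax (m : ℕ) (f : ℕ → ℝ) (a : ℕ) : Prop :=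
  a ∈ Finset.Icc 1 m ∧ (∀ b ∈ Finset.Icc 1 m, f b ≤ f a) ∧
    ∀ b ∈ Finset.Icc 1 m, (∀ c ∈ Finset.Icc 1 m, f c ≤ f b) → b ≤ a

/-- Topkis: supermodularity implies the largest argmax is nondecreasing in the state. -/
theorem stmt0 (n m : ℕ) (hn : 1 ≤ n) (hm : 1 ≤ m) (φ : ℕ → ℕ → ℝ)
    (hsuper : ∀ x ∈ Finset.Icc 1 n, ∀ x' ∈ Finset.Icc 1 n,
      ∀ a ∈ Finset.Icc 1 m, ∀ a' ∈ Finset.Icc 1 m,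
      x < x' → a < a' → φ x a' - φ x a ≤ φ x' a' - φ x' a)
    (x x' : ℕ) (hx : x ∈ Finset.Icc 1 n) (hx' : x' ∈ Finset.Icc 1 n) (hxx : x ≤ x')
    (a a' : ℕ) (ha : IsLargestArgmax m (φ x) a) (ha' : IsLargestArgmax m (φ x') a') :
    a ≤ a' := by
  obtain ⟨haM, hamax, _⟩ := ha
  obtain ⟨ha'M, ha'max, ha'big⟩ := ha'
  by_contra h
  push_neg at h  -- a' < a
  rcases eq_or_lt_of_le hxx with rfl | hlt
  · exact absurd (ha'big a haM hamax) (not_le.mpr h)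
  · have h1 : φ x a' ≤ φ x a := hamax a' ha'M
    have h2 : φ x' a ≤ φ x' a' := ha'max a haM
    have hs := hsuper x hx x' hx' a' ha'M a haM hlt h
    have h3 : φ x' a' ≤ φ x' a := by linarith
    have heq : φ x' a = φ x' a' := le_antisymm h2 h3
    have : a ≤ a' := ha'big a haM (fun c hc => heq ▸ ha'max c hc)
    omega
end

section
/- Let X = {1,...,n} and A = {1,...,m} be finite totally ordered sets and φ : X × A → ℝ. Suppose there exists α : X × X × A → ℝ with α(x,x',a) > 0 and a ↦ α(x,x',a) nondecreasing, such that for all x' > x and all a < m: φ(x',a+1) - φ(x',a) ≥ α(x,x',a) · (φ(x,a+1) - φ(x,a)). Then the map x ↦ max {a : φ(x,a) = max_b φ(x,b)} is monotone nondecreasing in x. -/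
/-- Interval dominance (ID) implies the largest argmax is nondecreasing in the state. -/
theorem stmt1 (n m : ℕ) (hn : 1 ≤ n) (hm : 1 ≤ m) (φ : ℕ → ℕ → ℝ)
    (α : ℕ → ℕ → ℕ → ℝ)
    (hαpos : ∀ x x' a, 0 < α x x' a)
    (hαmono : ∀ x x' a a', a ≤ a' → α x x' a ≤ α x x' a')
    (hID : ∀ x ∈ Finset.Icc 1 n, ∀ x' ∈ Finset.Icc 1 n, x < x' →
      ∀ a, 1 ≤ a → a + 1 ≤ m →
      α x x' a * (φ x (a + 1) - φ x a) ≤ φ x' (a + 1) - φ x' a)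
    (x x' : ℕ) (hx : x ∈ Finset.Icc 1 n) (hx' : x' ∈ Finset.Icc 1 n) (hxx : x ≤ x')
    (a a' : ℕ) (ha : IsLargestArgmax m (φ x) a) (ha' : IsLargestArgmax m (φ x') a') :
    a ≤ a' := by
  obtain ⟨haI, hamax, halarge⟩ := ha
  obtain ⟨ha'I, ha'max, ha'large⟩ := ha'
  simp only [Finset.mem_Icc] at haI ha'I
  by_cases hcase : a ≤ a'
  · exact hcase
  push_neg at hcase
  -- show φ x' a' ≤ φ x' a, then a is also a maximizer at x', so a ≤ a'
  have hle : φ x' a' ≤ φ x' a := by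
    rcases eq_or_lt_of_le hxx with heq | hlt
    · subst heq
      exact hamax a' (Finset.mem_Icc.mpr ⟨ha'I.1, ha'I.2⟩)
    · have key : ∀ d, d ≤ a - a' →
          α x x' (a - d) * (φ x a - φ x (a - d)) ≤ φ x' a - φ x' (a - d) := by
        intro d
        induction d with
        | zero => intro _; simp
        | succ k ih =>
          intro hk
          have hk' : k ≤ a - a' := by omega
          have IH := ih hk'
          set j := a - (k + 1) with hj
          have hj1 : j + 1 = a - k := by omega
          have hj1le : 1 ≤ j := by omega
          have hj2 : j + 1 ≤ m := by omega
          have hid := hID x hx x' hx' hlt j hj1le hj2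
          have hmono := hαmono x x' j (j + 1) (by omega)
          have hfle : φ x (j + 1) ≤ φ x a :=
            hamax (j + 1) (Finset.mem_Icc.mpr ⟨by omega, hj2⟩)
          rw [← hj1] at IH
          nlinarith [hαpos x x' j]
      have hkey := key (a - a') le_rfl
      have haa : a - (a - a') = a' := by omega
      rw [haa] at hkey
      have hfle : φ x a' ≤ φ x a :=
        hamax a' (Finset.mem_Icc.mpr ⟨ha'I.1, by omega⟩)
      nlinarith [hαpos x x' a']
  exact ha'large a (Finset.mem_Icc.mpr ⟨haI.1, haI.2⟩)
    (fun c hc => le_trans (ha'max c hc) hle)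
end

section
/- Consider a finite-horizon MDP on X = {1,...,n}, A = {1,...,m} satisfying: (A1) r(x,a) nondecreasing in x; (A2) P_x(a) ≤_s P_{x+1}(a) for all x, a; (A5) terminal reward t nondecreasing; (A6) there is β(x,x',a) > 0 nondecreasing in a with r(x',a+1)-r(x',a) ≥ β(x,x',a)(r(x,a+1)-r(x,a)) for x' > x; (A7) there is α(x,x',a) > 0 nondecreasing in a with ∑_{j≥l}(P_{x',j}(a+1)-P_{x',j}(a)) ≥ α(x,x',a)·∑_{j≥l}(P_{x,j}(a+1)-P_{x,j}(a)) for all l and x' > x; (A8) one can take α = β. Then for every k the map x ↦ max argmax_a Q_k(x,a) is monotone nondecreasing, i.e., there exists an optimal policy μ*_k nondecreasing in x. -/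
/-!
Expectations are compared by summation by parts against the tail sums `∑ j ∈ Icc l n, _`,
tested on a continuation value that is nondecreasing in the state. Applied to rows of `P`, this
makes the expectation monotone under first-order stochastic dominance, so backward induction
shows that every `V k` is nondecreasing. Applied to the differences `P (a + 1) x - P a x`, whose
totals vanish, it turns (A7) and (A6) into
`γ x x' a * (Q k x (a + 1) - Q k x a) ≤ Q k x' (a + 1) - Q k x' a` for `x < x'`. Since `γ` is
positive and nondecreasing in `a`, these weighted increments telescope: if the largest maximizer
`a` at `x` exceeded the one `a'` at `x'`, then `Q k x' a ≥ Q k x' a'`, contradicting the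
maximality of `a'`.
-/

open Finset

theorem mul_sum_le_sum_mul_of_tail_nonneg {c w : ℕ → ℝ} {l n : ℕ}
    (hw : MonotoneOn w (Icc l n : Set ℕ))
    (hc : ∀ i ∈ Icc (l + 1) n, 0 ≤ ∑ j ∈ Icc i n, c j) :
    w l * ∑ j ∈ Icc l n, c j ≤ ∑ j ∈ Icc l n, c j * w j := by
  induction hd : n - l generalizing l with
  | zero =>
    rcases (Nat.sub_eq_zero_iff_le.1 hd).eq_or_lt with rfl | hlt
    · simp [mul_comm]
    · simp [Icc_eq_empty_of_lt hlt]
  | succ d ih =>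
    have hl : l + 1 ≤ n := by omega
    have htail := ih (l := l + 1) (hw.mono (coe_subset.2 (Icc_subset_Icc_left l.le_succ)))
      (fun i hi => hc i (Icc_subset_Icc_left (l + 1).le_succ hi)) (by omega)
    have hstep : w l * ∑ j ∈ Icc (l + 1) n, c j ≤ w (l + 1) * ∑ j ∈ Icc (l + 1) n, c j :=
      mul_le_mul_of_nonneg_right
        (hw (mem_Icc.2 ⟨le_rfl, l.le_succ.trans hl⟩) (mem_Icc.2 ⟨l.le_succ, hl⟩) l.le_succ)
        (hc (l + 1) (mem_Icc.2 ⟨le_rfl, hl⟩))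
    rw [← insert_Icc_add_one_left_eq_Icc (l.le_succ.trans hl), sum_insert (by simp),
      sum_insert (by simp)]
    linarith

theorem sum_mul_nonneg_of_tail_nonneg {c w : ℕ → ℝ} {n : ℕ}
    (hw : MonotoneOn w (Icc 1 n : Set ℕ)) (hc : ∀ i ∈ Icc 2 n, 0 ≤ ∑ j ∈ Icc i n, c j)
    (htot : ∑ j ∈ Icc 1 n, c j = 0) :
    0 ≤ ∑ j ∈ Icc 1 n, c j * w j := by
  simpa [htot] using mul_sum_le_sum_mul_of_tail_nonneg hw hc

theorem sum_mul_le_sum_mul_of_tail_le {p q w : ℕ → ℝ} {n : ℕ}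
    (hw : MonotoneOn w (Icc 1 n : Set ℕ))
    (hpq : ∀ i ∈ Icc 2 n, ∑ j ∈ Icc i n, p j ≤ ∑ j ∈ Icc i n, q j)
    (htot : ∑ j ∈ Icc 1 n, p j = ∑ j ∈ Icc 1 n, q j) :
    ∑ j ∈ Icc 1 n, p j * w j ≤ ∑ j ∈ Icc 1 n, q j * w j := by
  have := sum_mul_nonneg_of_tail_nonneg (c := q - p) hw
    (fun i hi => by simpa [sum_sub_distrib] using hpq i hi) (by simp [sum_sub_distrib, htot])
  simpa [sub_mul, sum_sub_distrib] using this

theorem mul_sub_sum_mul_le_of_tail {p p' q q' w : ℕ → ℝ} {n : ℕ} {g : ℝ}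
    (hw : MonotoneOn w (Icc 1 n : Set ℕ))
    (htail : ∀ i ∈ Icc 2 n, g * (∑ j ∈ Icc i n, p' j - ∑ j ∈ Icc i n, p j) ≤
      ∑ j ∈ Icc i n, q' j - ∑ j ∈ Icc i n, q j)
    (hp : ∑ j ∈ Icc 1 n, p' j = ∑ j ∈ Icc 1 n, p j)
    (hq : ∑ j ∈ Icc 1 n, q' j = ∑ j ∈ Icc 1 n, q j) :
    g * (∑ j ∈ Icc 1 n, p' j * w j - ∑ j ∈ Icc 1 n, p j * w j) ≤
      ∑ j ∈ Icc 1 n, q' j * w j - ∑ j ∈ Icc 1 n, q j * w j := by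
  have := sum_mul_nonneg_of_tail_nonneg (c := fun j => q' j - q j - g * (p' j - p j)) hw
    (fun i hi => by simpa [sum_sub_distrib, ← mul_sum] using htail i hi)
    (by simp [sum_sub_distrib, ← mul_sum, hp, hq])
  simpa [sub_mul, mul_sub, sum_sub_distrib, mul_sum, mul_assoc] using this

theorem monotoneOn_sum_mul_of_tail_le_succ {p : ℕ → ℕ → ℝ} {w : ℕ → ℝ} {n : ℕ}
    (hp : ∀ x ∈ Icc 1 n, ∑ j ∈ Icc 1 n, p x j = 1)
    (hdom : ∀ x, 1 ≤ x → x + 1 ≤ n → ∀ i ∈ Icc 1 n,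
      ∑ j ∈ Icc i n, p x j ≤ ∑ j ∈ Icc i n, p (x + 1) j)
    (hw : MonotoneOn w (Icc 1 n : Set ℕ)) :
    MonotoneOn (fun x => ∑ j ∈ Icc 1 n, p x j * w j) (Icc 1 n : Set ℕ) := by
  refine monotoneOn_of_le_succ (by rw [coe_Icc]; exact Set.ordConnected_Icc)
    fun x _ hx hx1 => ?_
  rw [Order.succ_eq_add_one] at hx1 ⊢
  exact sum_mul_le_sum_mul_of_tail_le hw
    (fun i hi => hdom x (mem_Icc.1 hx).1 (mem_Icc.1 hx1).2 i (Icc_subset_Icc_left one_le_two hi))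
    (by rw [hp x hx, hp (x + 1) hx1])

theorem monotoneOn_of_isGreatest_image {α ι β : Type*} [Preorder α] [Preorder β]
    {S : Set α} {s : Set ι} {f : α → ι → β} {v : α → β}
    (hf : ∀ a ∈ s, MonotoneOn (f · a) S) (hv : ∀ x, IsGreatest (f x '' s) (v x)) :
    MonotoneOn v S := by
  intro x hx y hy hxy
  obtain ⟨⟨a, ha, hfa⟩, -⟩ := hv x
  rw [← hfa]
  exact (hf a ha hx hy hxy).trans ((hv y).2 ⟨a, ha, rfl⟩)

theorem mul_sub_le_sub_of_weighted_increments {f g γ : ℕ → ℝ} {b a : ℕ} (hba : b ≤ a)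
    (hγ : MonotoneOn γ (Icc b a : Set ℕ))
    (hinc : ∀ c ∈ Ico b a, γ c * (f (c + 1) - f c) ≤ g (c + 1) - g c)
    (hf : ∀ c ∈ Icc b a, f c ≤ f a) :
    γ b * (f a - f b) ≤ g a - g b := by
  induction hba using Nat.decreasingInduction with
  | self => simp
  | of_succ b hb ih =>
    have ih' := ih (hγ.mono (coe_subset.2 (Icc_subset_Icc_left b.le_succ)))
      (fun c hc => hinc c (Ico_subset_Ico_left b.le_succ hc))
      (fun c hc => hf c (Icc_subset_Icc_left b.le_succ hc))
    have hγb : γ b ≤ γ (b + 1) :=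
      hγ (mem_Icc.2 ⟨le_rfl, hb.le⟩) (mem_Icc.2 ⟨b.le_succ, hb⟩) b.le_succ
    have hfb : 0 ≤ f a - f (b + 1) := sub_nonneg.2 (hf (b + 1) (mem_Icc.2 ⟨b.le_succ, hb⟩))
    calc γ b * (f a - f b) = γ b * (f a - f (b + 1)) + γ b * (f (b + 1) - f b) := by ring
      _ ≤ γ (b + 1) * (f a - f (b + 1)) + (g (b + 1) - g b) :=
        add_le_add (mul_le_mul_of_nonneg_right hγb hfb) (hinc b (mem_Ico.2 ⟨le_rfl, hb⟩))
      _ ≤ g a - g b := by linarith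

theorem IsLargestArgmax.le_of_weighted_increments {m a a' : ℕ} {f g γ : ℕ → ℝ}
    (ha : IsLargestArgmax m f a) (ha' : IsLargestArgmax m g a')
    (hγ_pos : ∀ c ∈ Icc 1 m, 0 < γ c) (hγ_mono : MonotoneOn γ (Icc 1 m : Set ℕ))
    (hinc : ∀ c, 1 ≤ c → c + 1 ≤ m → γ c * (f (c + 1) - f c) ≤ g (c + 1) - g c) :
    a ≤ a' := by
  obtain ⟨ha_mem, hfa, -⟩ := ha
  obtain ⟨ha'_mem, hga', ha'_largest⟩ := ha'
  by_contra! hlt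
  have hsub : Icc a' a ⊆ Icc 1 m := Icc_subset_Icc (mem_Icc.1 ha'_mem).1 (mem_Icc.1 ha_mem).2
  have htele : γ a' * (f a - f a') ≤ g a - g a' :=
    mul_sub_le_sub_of_weighted_increments hlt.le (hγ_mono.mono (coe_subset.2 hsub))
      (fun c hc => hinc c ((mem_Icc.1 (hsub (Ico_subset_Icc_self hc))).1)
        (by have := mem_Ico.1 hc; have := mem_Icc.1 ha_mem; omega))
      (fun c hc => hfa c (hsub hc))
  have hga : g a' ≤ g a :=
    sub_nonneg.1 ((mul_nonneg (hγ_pos a' ha'_mem).le (sub_nonneg.2 (hfa a' ha'_mem))).trans htele)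
  exact hlt.not_ge (ha'_largest a ha_mem fun c hc => (hga' c hc).trans hga)

theorem stmt7_general (n m N : ℕ)
    (r : ℕ → ℕ → ℝ) (P : ℕ → ℕ → ℕ → ℝ) (t : ℕ → ℝ)
    (hP1 : ∀ a ∈ Finset.Icc 1 m, ∀ x ∈ Finset.Icc 1 n, (∑ j ∈ Finset.Icc 1 n, P a x j) = 1)
    -- (A1) rewards nondecreasing in the state
    (hA1 : ∀ a ∈ Finset.Icc 1 m, ∀ x ∈ Finset.Icc 1 n, ∀ x' ∈ Finset.Icc 1 n,
        x ≤ x' → r x a ≤ r x' a)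
    -- (A2) first-order stochastic dominance of successive rows
    (hA2 : ∀ a ∈ Finset.Icc 1 m, ∀ x, 1 ≤ x → x + 1 ≤ n → ∀ l ∈ Finset.Icc 1 n,
        (∑ j ∈ Finset.Icc l n, P a x j) ≤ ∑ j ∈ Finset.Icc l n, P a (x + 1) j)
    -- (A5) terminal reward nondecreasing
    (hA5 : ∀ x ∈ Finset.Icc 1 n, ∀ x' ∈ Finset.Icc 1 n, x ≤ x' → t x ≤ t x')
    -- (A6),(A7),(A8): a common multiplier γ = α = β, positive and nondecreasing in a
    (γ : ℕ → ℕ → ℕ → ℝ)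
    (hγpos : ∀ x x' a, 0 < γ x x' a)
    (hγmono : ∀ x x' a a', a ≤ a' → γ x x' a ≤ γ x x' a')
    (hA6 : ∀ x ∈ Finset.Icc 1 n, ∀ x' ∈ Finset.Icc 1 n, x < x' →
        ∀ a, 1 ≤ a → a + 1 ≤ m →
        γ x x' a * (r x (a + 1) - r x a) ≤ r x' (a + 1) - r x' a)
    (hA7 : ∀ x ∈ Finset.Icc 1 n, ∀ x' ∈ Finset.Icc 1 n, x < x' →
        ∀ a, 1 ≤ a → a + 1 ≤ m → ∀ l ∈ Finset.Icc 1 n,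
        γ x x' a * ((∑ j ∈ Finset.Icc l n, P (a + 1) x j) - ∑ j ∈ Finset.Icc l n, P a x j) ≤
          (∑ j ∈ Finset.Icc l n, P (a + 1) x' j) - ∑ j ∈ Finset.Icc l n, P a x' j)
    -- Bellman backward recursion
    (V : ℕ → ℕ → ℝ) (Q : ℕ → ℕ → ℕ → ℝ)
    (hVN : ∀ x, V N x = t x)
    (hQ : ∀ k < N, ∀ x a,
        Q k x a = r x a + ∑ j ∈ Finset.Icc 1 n, P a x j * V (k + 1) j)
    (hV : ∀ k < N, ∀ x, IsGreatest ((fun a => Q k x a) '' ↑(Finset.Icc 1 m)) (V k x)) :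
    ∀ k < N, ∀ x ∈ Finset.Icc 1 n, ∀ x' ∈ Finset.Icc 1 n, x ≤ x' →
      ∀ a a', IsLargestArgmax m (Q k x) a → IsLargestArgmax m (Q k x') a' → a ≤ a' := by
  have hV_mono : ∀ k ≤ N, MonotoneOn (V k) (Icc 1 n : Set ℕ) := by
    intro k hk
    induction hk using Nat.decreasingInduction with
    | self => rw [funext hVN]; exact hA5
    | of_succ k hk ih =>
      refine monotoneOn_of_isGreatest_image (fun a ha => ?_) (hV k hk)
      simp only [hQ k hk]
      exact MonotoneOn.add (f := (r · a)) (hA1 a ha)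
        (monotoneOn_sum_mul_of_tail_le_succ (hP1 a ha) (hA2 a ha) ih)
  have hinc : ∀ k < N, ∀ x ∈ Icc 1 n, ∀ x' ∈ Icc 1 n, x < x' → ∀ a, 1 ≤ a → a + 1 ≤ m →
      γ x x' a * (Q k x (a + 1) - Q k x a) ≤ Q k x' (a + 1) - Q k x' a := by
    intro k hk x hx x' hx' hlt a ha ham
    have ha_mem : a ∈ Icc 1 m := mem_Icc.2 ⟨ha, by omega⟩
    have ha1_mem : a + 1 ∈ Icc 1 m := mem_Icc.2 ⟨by omega, ham⟩
    have hE := mul_sub_sum_mul_le_of_tail (hV_mono (k + 1) hk)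
      (fun i hi => hA7 x hx x' hx' hlt a ha ham i (Icc_subset_Icc_left one_le_two hi))
      (by rw [hP1 _ ha1_mem x hx, hP1 _ ha_mem x hx])
      (by rw [hP1 _ ha1_mem x' hx', hP1 _ ha_mem x' hx'])
    simp only [hQ k hk]
    linear_combination hA6 x hx x' hx' hlt a ha ham + hE
  intro k hk x hx x' hx' hxx' a a' ha ha'
  rcases hxx'.eq_or_lt with rfl | hlt
  · exact ha'.2.2 a ha.1 ha.2.1
  exact ha.le_of_weighted_increments ha' (fun c _ => hγpos x x' c)
    (Monotone.monotoneOn (f := γ x x') (hγmono x x') _) (hinc k hk x hx x' hx' hlt)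

/-- Theorem 1(ii) of the paper: under (A1),(A2),(A5),(A6),(A7),(A8) the largest
maximizer of `Q_k(x,·)` is nondecreasing in `x` for every stage `k`. -/
theorem stmt7 (n m N : ℕ) (hn : 1 ≤ n) (hm : 1 ≤ m)
    (r : ℕ → ℕ → ℝ) (P : ℕ → ℕ → ℕ → ℝ) (t : ℕ → ℝ)
    (hP0 : ∀ a ∈ Finset.Icc 1 m, ∀ x ∈ Finset.Icc 1 n, ∀ j ∈ Finset.Icc 1 n, 0 ≤ P a x j)
    (hP1 : ∀ a ∈ Finset.Icc 1 m, ∀ x ∈ Finset.Icc 1 n, (∑ j ∈ Finset.Icc 1 n, P a x j) = 1)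
    -- (A1) rewards nondecreasing in the state
    (hA1 : ∀ a ∈ Finset.Icc 1 m, ∀ x ∈ Finset.Icc 1 n, ∀ x' ∈ Finset.Icc 1 n,
        x ≤ x' → r x a ≤ r x' a)
    -- (A2) first-order stochastic dominance of successive rows
    (hA2 : ∀ a ∈ Finset.Icc 1 m, ∀ x, 1 ≤ x → x + 1 ≤ n → ∀ l ∈ Finset.Icc 1 n,
        (∑ j ∈ Finset.Icc l n, P a x j) ≤ ∑ j ∈ Finset.Icc l n, P a (x + 1) j)
    -- (A5) terminal reward nondecreasing
    (hA5 : ∀ x ∈ Finset.Icc 1 n, ∀ x' ∈ Finset.Icc 1 n, x ≤ x' → t x ≤ t x')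
    -- (A6),(A7),(A8): a common multiplier γ = α = β, positive and nondecreasing in a
    (γ : ℕ → ℕ → ℕ → ℝ)
    (hγpos : ∀ x x' a, 0 < γ x x' a)
    (hγmono : ∀ x x' a a', a ≤ a' → γ x x' a ≤ γ x x' a')
    (hA6 : ∀ x ∈ Finset.Icc 1 n, ∀ x' ∈ Finset.Icc 1 n, x < x' →
        ∀ a, 1 ≤ a → a + 1 ≤ m →
        γ x x' a * (r x (a + 1) - r x a) ≤ r x' (a + 1) - r x' a)
    (hA7 : ∀ x ∈ Finset.Icc 1 n, ∀ x' ∈ Finset.Icc 1 n, x < x' →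
        ∀ a, 1 ≤ a → a + 1 ≤ m → ∀ l ∈ Finset.Icc 1 n,
        γ x x' a * ((∑ j ∈ Finset.Icc l n, P (a + 1) x j) - ∑ j ∈ Finset.Icc l n, P a x j) ≤
          (∑ j ∈ Finset.Icc l n, P (a + 1) x' j) - ∑ j ∈ Finset.Icc l n, P a x' j)
    -- Bellman backward recursion
    (V : ℕ → ℕ → ℝ) (Q : ℕ → ℕ → ℕ → ℝ)
    (hVN : ∀ x, V N x = t x)
    (hQ : ∀ k < N, ∀ x a,
        Q k x a = r x a + ∑ j ∈ Finset.Icc 1 n, P a x j * V (k + 1) j)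
    (hV : ∀ k < N, ∀ x, IsGreatest ((fun a => Q k x a) '' ↑(Finset.Icc 1 m)) (V k x)) :
    ∀ k < N, ∀ x ∈ Finset.Icc 1 n, ∀ x' ∈ Finset.Icc 1 n, x ≤ x' →
      ∀ a a', IsLargestArgmax m (Q k x) a → IsLargestArgmax m (Q k x') a' → a ≤ a' :=
  stmt7_general n m N r P t hP1 hA1 hA2 hA5 γ hγpos hγmono hA6 hA7 V Q hVN hQ hV
end

section
/- Let p be a probability vector on {1,...,n}, let e_1, e_n denote unit vectors, and define transition rows P_i(a) = p + Δ(i,a)·(e_n - e_1) where Δ(1,a) = 0, Δ(i,a) ∈ [0, min(p_1, 1 - p_n)], Δ(i,a) is nondecreasing in i. If Δ satisfies the ID condition in (i,a) with some α(i,i',a) > 0 nondecreasing in a, then the transition probabilities satisfy condition (A7): for every l and i' > i, ∑_{j≥l}(P_{i',j}(a+1)-P_{i',j}(a)) ≥ α(i,i',a)·∑_{j≥l}(P_{i,j}(a+1)-P_{i,j}(a)); moreover each P_i(a) is a probability vector and P_i(a) ≤_s P_{i+1}(a). -/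
/-- Perturbed transition rows `P_i(a) = p + Δ(i,a)(e_n - e_1)` (Corollary 3 of the paper):
if `Δ` satisfies ID then the rows satisfy (A7), are probability vectors, and successive
rows are first-order stochastically ordered. -/
theorem stmt9 (n m : ℕ) (hn : 2 ≤ n) (hm : 1 ≤ m)
    (p : ℕ → ℝ) (hp0 : ∀ j ∈ Finset.Icc 1 n, 0 ≤ p j)
    (hp1 : (∑ j ∈ Finset.Icc 1 n, p j) = 1)
    (Δ : ℕ → ℕ → ℝ)
    (P : ℕ → ℕ → ℕ → ℝ)
    (hPdef : ∀ a i j, P a i j =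
      p j + Δ i a * ((if j = n then (1 : ℝ) else 0) - (if j = 1 then (1 : ℝ) else 0)))
    (hΔ1 : ∀ a ∈ Finset.Icc 1 m, Δ 1 a = 0)
    (hΔrange : ∀ i ∈ Finset.Icc 1 n, ∀ a ∈ Finset.Icc 1 m,
        0 ≤ Δ i a ∧ Δ i a ≤ min (p 1) (1 - p n))
    (hΔmono : ∀ a ∈ Finset.Icc 1 m, ∀ i ∈ Finset.Icc 1 n, ∀ i' ∈ Finset.Icc 1 n,
        i ≤ i' → Δ i a ≤ Δ i' a)
    (α : ℕ → ℕ → ℕ → ℝ)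
    (hαpos : ∀ i i' a, 0 < α i i' a)
    (hαmono : ∀ i i' a a', a ≤ a' → α i i' a ≤ α i i' a')
    (hΔID : ∀ i ∈ Finset.Icc 1 n, ∀ i' ∈ Finset.Icc 1 n, i < i' →
        ∀ a, 1 ≤ a → a + 1 ≤ m →
        α i i' a * (Δ i (a + 1) - Δ i a) ≤ Δ i' (a + 1) - Δ i' a) :
    -- (A7)
    (∀ i ∈ Finset.Icc 1 n, ∀ i' ∈ Finset.Icc 1 n, i < i' →
        ∀ a, 1 ≤ a → a + 1 ≤ m → ∀ l ∈ Finset.Icc 1 n,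
        α i i' a * ((∑ j ∈ Finset.Icc l n, P (a + 1) i j) - ∑ j ∈ Finset.Icc l n, P a i j) ≤
          (∑ j ∈ Finset.Icc l n, P (a + 1) i' j) - ∑ j ∈ Finset.Icc l n, P a i' j) ∧
    -- each row is a probability vector
    (∀ a ∈ Finset.Icc 1 m, ∀ i ∈ Finset.Icc 1 n,
        (∀ j ∈ Finset.Icc 1 n, 0 ≤ P a i j) ∧ (∑ j ∈ Finset.Icc 1 n, P a i j) = 1) ∧
    -- first-order stochastic monotonicity of rows
    (∀ a ∈ Finset.Icc 1 m, ∀ i, 1 ≤ i → i + 1 ≤ n → ∀ l ∈ Finset.Icc 1 n,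
        (∑ j ∈ Finset.Icc l n, P a i j) ≤ ∑ j ∈ Finset.Icc l n, P a (i + 1) j) := by
  -- key sum formula
  have key : ∀ a i l, l ∈ Finset.Icc 1 n →
      (∑ j ∈ Finset.Icc l n, P a i j) =
        (∑ j ∈ Finset.Icc l n, p j) + Δ i a * (1 - if l = 1 then (1:ℝ) else 0) := by
    intro a i l hl
    simp only [Finset.mem_Icc] at hl
    have hsum : ∀ c : ℕ, (∑ j ∈ Finset.Icc l n, (if j = c then (1:ℝ) else 0))
        = if c ∈ Finset.Icc l n then (1:ℝ) else 0 := by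
      intro c; rw [Finset.sum_ite_eq' (Finset.Icc l n) c (fun _ => (1:ℝ))]
    calc (∑ j ∈ Finset.Icc l n, P a i j)
        = ∑ j ∈ Finset.Icc l n, (p j + Δ i a *
            ((if j = n then (1:ℝ) else 0) - (if j = 1 then (1:ℝ) else 0))) := by
          apply Finset.sum_congr rfl; intro j _; rw [hPdef]
      _ = (∑ j ∈ Finset.Icc l n, p j) + Δ i a *
            ((∑ j ∈ Finset.Icc l n, (if j = n then (1:ℝ) else 0))
             - ∑ j ∈ Finset.Icc l n, (if j = 1 then (1:ℝ) else 0)) := by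
          rw [Finset.sum_add_distrib]
          congr 1
          rw [mul_sub, Finset.mul_sum, Finset.mul_sum, ← Finset.sum_sub_distrib]
          apply Finset.sum_congr rfl; intros; ring
      _ = _ := by
          rw [hsum n, hsum 1]
          have h1 : (1 ∈ Finset.Icc l n) = (l = 1) := by
            simp [Finset.mem_Icc]
            constructor
            · intro ⟨h, _⟩; omega
            · intro h; omega
          simp [Finset.mem_Icc, hl.1, hl.2, le_refl, h1]
  have hc : ∀ l : ℕ, (0:ℝ) ≤ (1 - if l = 1 then (1:ℝ) else 0) := by
    intro l; by_cases h : l = 1 <;> simp [h]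
  refine ⟨?_, ?_, ?_⟩
  · -- (A7)
    intro i hi i' hi' hii' a ha ham l hl
    have hcnn := hc l
    rw [key (a+1) i l hl, key a i l hl, key (a+1) i' l hl, key a i' l hl]
    set c := (1 - if l = 1 then (1:ℝ) else 0) with hcdef
    have hID := hΔID i hi i' hi' hii' a ha ham
    have h2 := mul_le_mul_of_nonneg_right hID hcnn
    nlinarith [h2]
  · -- probability vector
    intro a ha i hi
    have hr := hΔrange i hi a ha
    constructor
    · intro j hj
      have hpj := hp0 j hj
      rw [hPdef]
      simp only [Finset.mem_Icc] at hj
      by_cases h1 : j = 1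
      · have hjn : j ≠ n := by omega
        simp only [h1, if_pos rfl]
        have : ¬ (1 = n) := by omega
        simp only [this, if_false]
        have : Δ i a ≤ p 1 := le_trans hr.2 (min_le_left _ _)
        norm_num
        linarith
      · by_cases h2 : j = n
        · simp only [h2, if_pos rfl, h1]
          have : ¬ (n = 1) := by omega
          simp only [this, if_false]
          rw [h2] at hpj
          norm_num
          linarith [hr.1]
        · simp only [h1, h2, if_false]
          linarith
    · have h1 : (1:ℕ) ∈ Finset.Icc 1 n := by simp [Finset.mem_Icc]; omega
      rw [key a i 1 h1]
      simp [hp1]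
  · -- stochastic monotonicity
    intro a ha i hi1 hin l hl
    have hi : i ∈ Finset.Icc 1 n := by simp [Finset.mem_Icc]; omega
    have hi' : i + 1 ∈ Finset.Icc 1 n := by simp [Finset.mem_Icc]; omega
    have hcnn := hc l
    rw [key a i l hl, key a (i+1) l hl]
    set c := (1 - if l = 1 then (1:ℝ) else 0) with hcdef
    have := hΔmono a ha i hi (i+1) hi' (by omega)
    nlinarith [mul_le_mul_of_nonneg_right this hcnn]
end

section
/- Let p, q be probability vectors on {1,...,n}. Then ∑_{l≤m'} ∑_{j≤l} p_j ≤ ∑_{l≤m'} ∑_{j≤l} q_j for all m' ∈ {1,...,n} if and only if ∑_j f(j)p_j ≥ ∑_j f(j)q_j for every nondecreasing concave function f : {1,...,n} → ℝ (integer concavity: f(j+1)-f(j) ≤ f(j)-f(j-1)). -/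
lemma tel_Ico (f : ℕ → ℝ) (j n : ℕ) (h : j ≤ n) :
    ∑ l ∈ Finset.Ico j n, (f (l + 1) - f l) = f n - f j := by
  induction n, h using Nat.le_induction with
  | base => simp
  | succ m hm ih => rw [Finset.sum_Ico_succ_top hm, ih]; ring

lemma abel (n : ℕ) (f p : ℕ → ℝ) :
    ∑ j ∈ Finset.Icc 1 n, f j * p j =
      f n * (∑ j ∈ Finset.Icc 1 n, p j)
        - ∑ l ∈ Finset.Ico 1 n, (f (l + 1) - f l) * ∑ j ∈ Finset.Icc 1 l, p j := by
  have tel : ∀ j ∈ Finset.Icc 1 n, f j * p j =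
      f n * p j - ∑ l ∈ Finset.Ico j n, (f (l + 1) - f l) * p j := by
    intro j hj
    rw [← Finset.sum_mul, tel_Ico f j n (Finset.mem_Icc.mp hj).2]
    ring
  rw [Finset.sum_congr rfl tel, Finset.sum_sub_distrib, Finset.mul_sum]
  congr 1
  rw [Finset.sum_comm' (t' := Finset.Ico 1 n) (s' := fun l => Finset.Icc 1 l)
    (fun j l => by simp only [Finset.mem_Icc, Finset.mem_Ico]; omega)]
  exact Finset.sum_congr rfl fun l _ => by rw [Finset.mul_sum]

/-- `p` is a probability vector on `{1,...,n}`. -/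
def IsProbVec (n : ℕ) (p : ℕ → ℝ) : Prop :=
  (∀ j ∈ Finset.Icc 1 n, 0 ≤ p j) ∧ (∑ j ∈ Finset.Icc 1 n, p j) = 1

/-- Second-order stochastic dominance is equivalent to dominance of expectations of all
nondecreasing integer-concave functions. -/
theorem stmt10 (n : ℕ) (hn : 1 ≤ n) (p q : ℕ → ℝ)
    (hp : IsProbVec n p) (hq : IsProbVec n q) :
    (∀ m' ∈ Finset.Icc 1 n,
        (∑ l ∈ Finset.Icc 1 m', ∑ j ∈ Finset.Icc 1 l, p j) ≤
          ∑ l ∈ Finset.Icc 1 m', ∑ j ∈ Finset.Icc 1 l, q j) ↔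
    (∀ f : ℕ → ℝ,
        (∀ j ∈ Finset.Icc 1 n, ∀ j' ∈ Finset.Icc 1 n, j ≤ j' → f j ≤ f j') →
        (∀ j, 2 ≤ j → j + 1 ≤ n → f (j + 1) - f j ≤ f j - f (j - 1)) →
        (∑ j ∈ Finset.Icc 1 n, f j * q j) ≤ ∑ j ∈ Finset.Icc 1 n, f j * p j) := by
  have hset : Finset.Icc 1 (n - 1) = Finset.Ico 1 n := by
    ext x; simp only [Finset.mem_Icc, Finset.mem_Ico]; omega
  constructor
  · intro hdom f hmono hconc
    set g : ℕ → ℝ := fun l =>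
      (∑ j ∈ Finset.Icc 1 l, q j) - (∑ j ∈ Finset.Icc 1 l, p j) with hg
    have hT : ∀ k, k ≤ n - 1 → 0 ≤ ∑ l ∈ Finset.Icc 1 k, g l := by
      intro k hk
      rcases Nat.eq_zero_or_pos k with h0 | h1
      · subst h0; simp
      · have h2 := hdom k (Finset.mem_Icc.mpr ⟨h1, by omega⟩)
        rw [hg, Finset.sum_sub_distrib]
        linarith
    have habel2 := abel (n - 1) (fun l => f (l + 1) - f l) g
    rw [hset, show n - 1 + 1 = n from by omega] at habel2
    have hTn : 0 ≤ ∑ l ∈ Finset.Ico 1 n, g l := by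
      rw [← hset]; exact hT (n - 1) le_rfl
    have hfirst : 0 ≤ (f n - f (n - 1)) * ∑ l ∈ Finset.Ico 1 n, g l := by
      rcases eq_or_lt_of_le hn with h1 | h1
      · have : Finset.Ico 1 n = ∅ := by rw [← h1]; simp
        rw [this]; simp
      · refine mul_nonneg ?_ hTn
        have := hmono (n - 1) (Finset.mem_Icc.mpr ⟨by omega, by omega⟩)
          n (Finset.mem_Icc.mpr ⟨by omega, le_rfl⟩) (by omega)
        linarith
    have hsecond : ∑ k ∈ Finset.Ico 1 (n - 1),
        ((f (k + 1 + 1) - f (k + 1)) - (f (k + 1) - f k)) * ∑ l ∈ Finset.Icc 1 k, g l ≤ 0 := by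
      apply Finset.sum_nonpos
      intro k hk
      obtain ⟨hk1, hk2⟩ := Finset.mem_Ico.mp hk
      have hc := hconc (k + 1) (by omega) (by omega)
      rw [show k + 1 - 1 = k from by omega] at hc
      exact mul_nonpos_of_nonpos_of_nonneg (by linarith) (hT k (by omega))
    have hdiff : 0 ≤ ∑ l ∈ Finset.Ico 1 n, (f (l + 1) - f l) * g l := by
      rw [habel2]; linarith
    have e1 := abel n f p
    have e2 := abel n f q
    rw [hp.2] at e1
    rw [hq.2] at e2
    have hsub : ∑ l ∈ Finset.Ico 1 n, (f (l + 1) - f l) * g l =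
        (∑ l ∈ Finset.Ico 1 n, (f (l + 1) - f l) * ∑ j ∈ Finset.Icc 1 l, q j)
          - ∑ l ∈ Finset.Ico 1 n, (f (l + 1) - f l) * ∑ j ∈ Finset.Icc 1 l, p j := by
      rw [← Finset.sum_sub_distrib]
      exact Finset.sum_congr rfl fun l _ => by rw [hg]; ring
    linarith
  · intro hf
    have hlt : ∀ m, 1 ≤ m → m < n →
        (∑ l ∈ Finset.Icc 1 m, ∑ j ∈ Finset.Icc 1 l, p j) ≤
          ∑ l ∈ Finset.Icc 1 m, ∑ j ∈ Finset.Icc 1 l, q j := by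
      intro m hm1 hmn
      set f : ℕ → ℝ := fun j => min (j : ℝ) ((m : ℝ) + 1) with hfdef
      have hmono : ∀ j ∈ Finset.Icc 1 n, ∀ j' ∈ Finset.Icc 1 n, j ≤ j' → f j ≤ f j' := by
        intro j _ j' _ hjj'
        exact min_le_min (by exact_mod_cast hjj') le_rfl
      have hconc : ∀ j, 2 ≤ j → j + 1 ≤ n → f (j + 1) - f j ≤ f j - f (j - 1) := by
        intro j hj2 hjn
        have hcast : ((j - 1 : ℕ) : ℝ) = (j : ℝ) - 1 := by
          have : (1 : ℕ) ≤ j := by omega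
          push_cast [this]; ring
        simp only [hfdef, hcast, min_def]
        split_ifs <;> push_cast at * <;> linarith
      have h := hf f hmono hconc
      rw [abel n f p, abel n f q, hp.2, hq.2] at h
      have key : ∀ r : ℕ → ℝ,
          ∑ l ∈ Finset.Ico 1 n, (f (l + 1) - f l) * (∑ j ∈ Finset.Icc 1 l, r j) =
            ∑ l ∈ Finset.Icc 1 m, ∑ j ∈ Finset.Icc 1 l, r j := by
        intro r
        have step : ∀ l ∈ Finset.Ico 1 n,
            (f (l + 1) - f l) * (∑ j ∈ Finset.Icc 1 l, r j) =
              if l ≤ m then (∑ j ∈ Finset.Icc 1 l, r j) else 0 := by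
          intro l hl
          rcases le_or_gt l m with hlm | hml
          · have h1 : f (l + 1) = (l : ℝ) + 1 := by
              simp only [hfdef]; push_cast
              exact min_eq_left (by exact_mod_cast Nat.add_le_add_right hlm 1)
            have h2 : f l = (l : ℝ) := by
              simp only [hfdef]
              exact min_eq_left (by exact_mod_cast Nat.le_succ_of_le hlm)
            rw [h1, h2, if_pos hlm]; ring
          · have h1 : f (l + 1) = (m : ℝ) + 1 := by
              simp only [hfdef]
              exact min_eq_right (by exact_mod_cast Nat.add_le_add_right (le_of_lt hml) 1)
            have h2 : f l = (m : ℝ) + 1 := by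
              simp only [hfdef]
              exact min_eq_right (by exact_mod_cast hml)
            rw [h1, h2, if_neg (by omega)]; ring
        rw [Finset.sum_congr rfl step, ← Finset.sum_filter]
        congr 1
        ext x
        simp only [Finset.mem_filter, Finset.mem_Ico, Finset.mem_Icc]
        omega
      rw [key p, key q] at h
      linarith
    intro m hm
    obtain ⟨hm1, hm2⟩ := Finset.mem_Icc.mp hm
    rcases lt_or_eq_of_le hm2 with hlt' | heq
    · exact hlt m hm1 hlt'
    · subst heq
      obtain ⟨k, rfl⟩ : ∃ k, m = k + 1 := ⟨m - 1, by omega⟩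
      have e1 : ∑ l ∈ Finset.Icc 1 (k + 1), (∑ j ∈ Finset.Icc 1 l, p j) =
          (∑ l ∈ Finset.Icc 1 k, ∑ j ∈ Finset.Icc 1 l, p j) + ∑ j ∈ Finset.Icc 1 (k + 1), p j :=
        Finset.sum_Icc_succ_top (by omega) _
      have e2 : ∑ l ∈ Finset.Icc 1 (k + 1), (∑ j ∈ Finset.Icc 1 l, q j) =
          (∑ l ∈ Finset.Icc 1 k, ∑ j ∈ Finset.Icc 1 l, q j) + ∑ j ∈ Finset.Icc 1 (k + 1), q j :=
        Finset.sum_Icc_succ_top (by omega) _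
      rw [e1, e2, hp.2, hq.2]
      rcases Nat.eq_zero_or_pos k with h0 | h1
      · subst h0; simp
      · have := hlt k h1 (by omega)
        linarith
end

section
/- Let P be an n×n row-stochastic matrix that is TP3 (all minors up to order 3 nonnegative) such that i ↦ ∑_j j·P_{ij} is nondecreasing and integer concave. If V : {1,...,n} → ℝ is integer concave and nondecreasing, then the vector PV with components ∑_j P_{ij} V(j) is integer concave and nondecreasing in i. -/
/-- `P` is totally positive of order 3 on `{1,...,n}`: all minors of order ≤ 3 are
nonnegative. -/
def IsTP3 (n : ℕ) (P : ℕ → ℕ → ℝ) : Prop :=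
  (∀ i ∈ Finset.Icc 1 n, ∀ j ∈ Finset.Icc 1 n, 0 ≤ P i j) ∧
  (∀ i ∈ Finset.Icc 1 n, ∀ i' ∈ Finset.Icc 1 n,
      ∀ j ∈ Finset.Icc 1 n, ∀ j' ∈ Finset.Icc 1 n, i < i' → j < j' →
      0 ≤ P i j * P i' j' - P i j' * P i' j) ∧
  (∀ i₁ ∈ Finset.Icc 1 n, ∀ i₂ ∈ Finset.Icc 1 n, ∀ i₃ ∈ Finset.Icc 1 n,
      ∀ j₁ ∈ Finset.Icc 1 n, ∀ j₂ ∈ Finset.Icc 1 n, ∀ j₃ ∈ Finset.Icc 1 n,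
      i₁ < i₂ → i₂ < i₃ → j₁ < j₂ → j₂ < j₃ →
      0 ≤ Matrix.det !![P i₁ j₁, P i₁ j₂, P i₁ j₃;
                        P i₂ j₁, P i₂ j₂, P i₂ j₃;
                        P i₃ j₁, P i₃ j₂, P i₃ j₃])

/-- Integer concavity of `f` on `{1,...,n}`. -/
def IntConcaveOn (n : ℕ) (f : ℕ → ℝ) : Prop :=
  ∀ x, 2 ≤ x → x + 1 ≤ n → f (x + 1) - f x ≤ f x - f (x - 1)

/-- Pure-algebra variation diminishing for a 3×3 TP3 matrix applied to (1,-2,1). -/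
lemma vd_alg (a b c d e f g h i : ℝ)
    (ha : 0 ≤ a) (hb : 0 ≤ b) (he : 0 ≤ e) (hg : 0 ≤ g) (hh : 0 ≤ h)
    (hm1 : 0 ≤ a*h - b*g) (hm2 : 0 ≤ a*i - c*g) (hm3 : 0 ≤ b*i - c*h)
    (hp1 : 0 ≤ e*i - f*h) (hp2 : 0 ≤ d*i - f*g) (hp3 : 0 ≤ d*h - e*g)
    (hq1 : 0 ≤ b*f - c*e) (hq2 : 0 ≤ a*f - c*d) (hq3 : 0 ≤ a*e - b*d)
    (hD : 0 ≤ a*(e*i - f*h) - b*(d*i - f*g) + c*(d*h - e*g))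
    (hy1 : a - 2*d + g < 0) (hy2 : 0 < b - 2*e + h) (hy3 : c - 2*f + i < 0) :
    False := by
  set y1 := a - 2*d + g with hy1d
  set y2 := b - 2*e + h with hy2d
  set y3 := c - 2*f + i with hy3d
  set D := a*(e*i - f*h) - b*(d*i - f*g) + c*(d*h - e*g) with hDd
  have E2 : -y1*(b*i - c*h) + y2*(a*i - c*g) - y3*(a*h - b*g) = -2*D := by
    rw [hy1d, hy2d, hy3d, hDd]; ring
  have t1 : 0 ≤ -y1*(b*i - c*h) := mul_nonneg (by linarith) hm3
  have t2 : 0 ≤ y2*(a*i - c*g) := mul_nonneg (by linarith) hm2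
  have t3 : 0 ≤ -y3*(a*h - b*g) := mul_nonneg (by linarith) hm1
  have hD0 : D = 0 := by linarith
  have hm1z : a*h - b*g = 0 := by
    have : -y3*(a*h - b*g) = 0 := by linarith
    have hy3' : -y3 ≠ 0 := by intro hc; simp at hc; linarith
    exact (mul_eq_zero.mp this).resolve_left hy3'
  have E1 : y1*(e*i - f*h) - y2*(d*i - f*g) + y3*(d*h - e*g) = D := by
    rw [hy1d, hy2d, hy3d, hDd]; ring
  have s1 : y1*(e*i - f*h) ≤ 0 := mul_nonpos_of_nonpos_of_nonneg (by linarith) hp1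
  have s2 : -(y2*(d*i - f*g)) ≤ 0 := by
    have := mul_nonneg (le_of_lt hy2) hp2; linarith
  have s3 : y3*(d*h - e*g) ≤ 0 := mul_nonpos_of_nonpos_of_nonneg (by linarith) hp3
  have hp3z : d*h - e*g = 0 := by
    have : y3*(d*h - e*g) = 0 := by linarith
    have hy3' : y3 ≠ 0 := by intro hc; linarith
    exact (mul_eq_zero.mp this).resolve_left hy3'
  have E3 : y1*(b*f - c*e) - y2*(a*f - c*d) + y3*(a*e - b*d) = D := by
    rw [hy1d, hy2d, hy3d, hDd]; ring
  have u1 : y1*(b*f - c*e) ≤ 0 := mul_nonpos_of_nonpos_of_nonneg (by linarith) hq1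
  have u2 : -(y2*(a*f - c*d)) ≤ 0 := by
    have := mul_nonneg (le_of_lt hy2) hq2; linarith
  have u3 : y3*(a*e - b*d) ≤ 0 := mul_nonpos_of_nonpos_of_nonneg (by linarith) hq3
  have hq3z : a*e - b*d = 0 := by
    have : y3*(a*e - b*d) = 0 := by linarith
    have hy3' : y3 ≠ 0 := by intro hc; linarith
    exact (mul_eq_zero.mp this).resolve_left hy3'
  -- y2 > 0 gives b > 0 or h > 0
  rcases (by by_contra hc; push_neg at hc; rw [hy2d] at hy2
             have h1 := le_antisymm hc.1 hb; have h2 := le_antisymm hc.2 hh; linarith :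
      0 < b ∨ 0 < h) with hbpos | hhpos
  · have key : y1 * b = a * y2 := by linear_combination (2:ℝ)*hq3z - hm1z
    have l1 : y1 * b < 0 := mul_neg_of_neg_of_pos hy1 hbpos
    have l2 : 0 ≤ a * y2 := mul_nonneg ha (le_of_lt hy2)
    linarith
  · have key : y1 * h = g * y2 := by linear_combination hm1z - (2:ℝ)*hp3z
    have l1 : y1 * h < 0 := mul_neg_of_neg_of_pos hy1 hhpos
    have l2 : 0 ≤ g * y2 := mul_nonneg hg (le_of_lt hy2)
    linarith
/-- Differences of a concave function are antitone. -/
lemma dV_antitone {n : ℕ} {V : ℕ → ℝ} (hV : IntConcaveOn n V) {p q : ℕ}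
    (hp : 2 ≤ p) (hq : q ≤ n) (hpq : p ≤ q) :
    V q - V (q - 1) ≤ V p - V (p - 1) := by
  induction q, hpq using Nat.le_induction with
  | base => exact le_refl _
  | succ q hq' ih =>
    have h2q : 2 ≤ q := le_trans hp hq'
    have hstep := hV q h2q hq
    have := ih (by omega)
    have : V q - V (q-1) ≤ V p - V (p-1) := ih (by omega)
    calc V (q+1) - V (q+1-1) = V (q+1) - V q := by norm_num
    _ ≤ V q - V (q-1) := hstep
    _ ≤ V p - V (p-1) := this

/-- Upper bound on increments. -/
lemma sum_upper {V : ℕ → ℝ} {a b : ℕ} (hab : a ≤ b) {t : ℝ}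
    (ht : ∀ k, a < k → k ≤ b → V k - V (k-1) ≤ t) :
    V b - V a ≤ ((b:ℝ) - a) * t := by
  induction b, hab using Nat.le_induction with
  | base => simp
  | succ b hb ih =>
    have h1 : V b - V a ≤ ((b:ℝ) - a) * t := ih (fun k hk1 hk2 => ht k hk1 (by omega))
    have h2 : V (b+1) - V b ≤ t := by
      have := ht (b+1) (by omega) (le_refl _); simpa using this
    push_cast; nlinarith
  
/-- Lower bound on increments. -/
lemma sum_lower {V : ℕ → ℝ} {a b : ℕ} (hab : a ≤ b) {t : ℝ}
    (ht : ∀ k, a < k → k ≤ b → t ≤ V k - V (k-1)) :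
    ((b:ℝ) - a) * t ≤ V b - V a := by
  induction b, hab using Nat.le_induction with
  | base => simp
  | succ b hb ih =>
    have h1 : ((b:ℝ) - a) * t ≤ V b - V a := ih (fun k hk1 hk2 => ht k hk1 (by omega))
    have h2 : t ≤ V (b+1) - V b := by
      have := ht (b+1) (by omega) (le_refl _); simpa using this
    push_cast; nlinarith

lemma chord_mid {n : ℕ} {V : ℕ → ℝ} (hV : IntConcaveOn n V) {a j b : ℕ}
    (ha : 1 ≤ a) (haj : a ≤ j) (hjb : j ≤ b) (hb : b ≤ n) :
    ((b:ℝ) - j) * V a + ((j:ℝ) - a) * V b ≤ ((b:ℝ) - a) * V j := by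
  rcases eq_or_lt_of_le haj with rfl | haj
  · have : ((b:ℝ) - a) * V a + ((a:ℝ) - a) * V b = ((b:ℝ) - a) * V a := by ring
    linarith [this.le]
  rcases eq_or_lt_of_le hjb with rfl | hjb
  · nlinarith [sq_nonneg ((j:ℝ) - a)]
  set t := V (j+1) - V j with htd
  have hj1n : j + 1 ≤ n := by omega
  have h1 : ((j:ℝ) - a) * t ≤ V j - V a := by
    apply sum_lower (le_of_lt haj)
    intro k hk1 hk2
    have := dV_antitone hV (p := k) (q := j+1) (by omega) hj1n (by omega)
    simpa [htd] using this
  have h2 : V b - V j ≤ ((b:ℝ) - j) * t := by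
    apply sum_upper (le_of_lt hjb)
    intro k hk1 hk2
    have := dV_antitone hV (p := j+1) (q := k) (by omega) (by omega) (by omega)
    simpa [htd] using this
  have hbj : (0:ℝ) ≤ (b:ℝ) - j := by
    have : (j:ℝ) ≤ b := by exact_mod_cast le_of_lt hjb
    linarith
  have hja : (0:ℝ) ≤ (j:ℝ) - a := by
    have : (a:ℝ) ≤ j := by exact_mod_cast le_of_lt haj
    linarith
  nlinarith [mul_nonneg hbj (by linarith : (0:ℝ) ≤ V j - V a - ((j:ℝ)-a)*t),
             mul_nonneg hja (by linarith : (0:ℝ) ≤ ((b:ℝ)-j)*t - (V b - V j))]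

lemma chord_out_left {n : ℕ} {V : ℕ → ℝ} (hV : IntConcaveOn n V) {a j b : ℕ}
    (hj : 1 ≤ j) (hja : j < a) (hab : a < b) (hb : b ≤ n) :
    ((b:ℝ) - a) * V j ≤ ((b:ℝ) - j) * V a + ((j:ℝ) - a) * V b := by
  set t := V (a+1) - V a with htd
  have ha1n : a + 1 ≤ n := by omega
  have hA : ((a:ℝ) - j) * t ≤ V a - V j := by
    apply sum_lower (le_of_lt hja)
    intro k hk1 hk2
    have := dV_antitone hV (p := k) (q := a+1) (by omega) ha1n (by omega)
    simpa [htd] using this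
  have hB : V b - V a ≤ ((b:ℝ) - a) * t := by
    apply sum_upper (le_of_lt hab)
    intro k hk1 hk2
    have := dV_antitone hV (p := a+1) (q := k) (by omega) (by omega) (by omega)
    simpa [htd] using this
  have hba : (0:ℝ) ≤ (b:ℝ) - a := by
    have : (a:ℝ) ≤ b := by exact_mod_cast le_of_lt hab
    linarith
  have haj' : (0:ℝ) ≤ (a:ℝ) - j := by
    have : (j:ℝ) ≤ a := by exact_mod_cast le_of_lt hja
    linarith
  nlinarith [mul_nonneg hba (by linarith : (0:ℝ) ≤ V a - V j - ((a:ℝ)-j)*t),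
             mul_nonneg haj' (by linarith : (0:ℝ) ≤ ((b:ℝ)-a)*t - (V b - V a))]

lemma chord_out_right {n : ℕ} {V : ℕ → ℝ} (hV : IntConcaveOn n V) {a j b : ℕ}
    (ha : 1 ≤ a) (hab : a < b) (hbj : b < j) (hjn : j ≤ n) :
    ((b:ℝ) - a) * V j ≤ ((b:ℝ) - j) * V a + ((j:ℝ) - a) * V b := by
  set t := V (b+1) - V b with htd
  have hA : V j - V b ≤ ((j:ℝ) - b) * t := by
    apply sum_upper (le_of_lt hbj)
    intro k hk1 hk2
    have := dV_antitone hV (p := b+1) (q := k) (by omega) (by omega) (by omega)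
    simpa [htd] using this
  have hB : ((b:ℝ) - a) * t ≤ V b - V a := by
    apply sum_lower (le_of_lt hab)
    intro k hk1 hk2
    have := dV_antitone hV (p := k) (q := b+1) (by omega) (by omega) (by omega)
    simpa [htd] using this
  have hba : (0:ℝ) ≤ (b:ℝ) - a := by
    have : (a:ℝ) ≤ b := by exact_mod_cast le_of_lt hab
    linarith
  have hjb' : (0:ℝ) ≤ (j:ℝ) - b := by
    have : (b:ℝ) ≤ j := by exact_mod_cast le_of_lt hbj
    linarith
  nlinarith [mul_nonneg hba (by linarith : (0:ℝ) ≤ ((j:ℝ)-b)*t - (V j - V b)),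
             mul_nonneg hjb' (by linarith : (0:ℝ) ≤ V b - V a - ((b:ℝ)-a)*t)]

lemma telescope_V (V : ℕ → ℝ) {j : ℕ} (hj : 1 ≤ j) :
    V j = V 1 + ∑ k ∈ Finset.Icc 2 j, (V k - V (k-1)) := by
  induction j, hj using Nat.le_induction with
  | base => simp
  | succ j hj ih =>
    rw [Finset.sum_Icc_succ_top (by omega : 2 ≤ j + 1)]
    simp only [Nat.add_sub_cancel]
    linarith [ih]

lemma abel_sum (n : ℕ) (R V : ℕ → ℝ) (hR0 : (∑ j ∈ Finset.Icc 1 n, R j) = 0) :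
    (∑ j ∈ Finset.Icc 1 n, R j * V j)
      = ∑ k ∈ Finset.Icc 2 n, (V k - V (k-1)) * (∑ j ∈ Finset.Icc k n, R j) := by
  have step1 : (∑ j ∈ Finset.Icc 1 n, R j * V j)
      = ∑ j ∈ Finset.Icc 1 n, (R j * V 1 + ∑ k ∈ Finset.Icc 2 n,
          (if k ≤ j then R j * (V k - V (k-1)) else 0)) := by
    apply Finset.sum_congr rfl
    intro j hj
    rw [Finset.mem_Icc] at hj
    have hfil : (Finset.Icc 2 n).filter (fun k => k ≤ j) = Finset.Icc 2 j := by
      ext k; simp [Finset.mem_Icc, Finset.mem_filter]; omega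
    have h2 : (∑ k ∈ Finset.Icc 2 n, (if k ≤ j then R j * (V k - V (k-1)) else 0))
        = ∑ k ∈ Finset.Icc 2 j, R j * (V k - V (k-1)) := by
      rw [← Finset.sum_filter, hfil]
    rw [h2, ← Finset.mul_sum, ← mul_add, ← telescope_V V hj.1]
  rw [step1, Finset.sum_add_distrib, ← Finset.sum_mul, hR0, zero_mul, zero_add,
      Finset.sum_comm]
  apply Finset.sum_congr rfl
  intro k hk
  rw [Finset.mem_Icc] at hk
  have hfil : (Finset.Icc 1 n).filter (fun j => k ≤ j) = Finset.Icc k n := by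
    ext j; simp [Finset.mem_Icc, Finset.mem_filter]; omega
  rw [← Finset.sum_filter, hfil, Finset.mul_sum]
  apply Finset.sum_congr rfl
  intro j _; ring

lemma tail_mono (n : ℕ) (P : ℕ → ℕ → ℝ)
    (hP1 : ∀ i ∈ Finset.Icc 1 n, (∑ j ∈ Finset.Icc 1 n, P i j) = 1)
    (hTP2 : ∀ i ∈ Finset.Icc 1 n, ∀ i' ∈ Finset.Icc 1 n,
      ∀ j ∈ Finset.Icc 1 n, ∀ j' ∈ Finset.Icc 1 n, i < i' → j < j' →
      0 ≤ P i j * P i' j' - P i j' * P i' j)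
    {i i' k : ℕ} (hi : i ∈ Finset.Icc 1 n) (hi' : i' ∈ Finset.Icc 1 n)
    (hii' : i < i') (hk2 : 2 ≤ k) (hkn : k ≤ n) :
    (∑ j ∈ Finset.Icc k n, P i j) ≤ ∑ j ∈ Finset.Icc k n, P i' j := by
  have e1 : Finset.Icc 1 n = Finset.Ioc 0 n := (Finset.Icc_add_one_left_eq_Ioc 0 n)
  have e2 : Finset.Icc k n = Finset.Ioc (k-1) n := by
    rw [← Finset.Icc_add_one_left_eq_Ioc]; congr 1; omega
  have e3 : Finset.Icc 1 (k-1) = Finset.Ioc 0 (k-1) := (Finset.Icc_add_one_left_eq_Ioc 0 (k-1))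
  have hsplit : ∀ m, m ∈ Finset.Icc 1 n →
      (∑ j ∈ Finset.Icc 1 (k-1), P m j) + (∑ j ∈ Finset.Icc k n, P m j) = 1 := by
    intro m hm
    rw [e2, e3, Finset.sum_Ioc_consecutive _ (by omega) (by omega), ← e1]
    exact hP1 m hm
  set s := Finset.Icc 1 (k-1)
  set t := Finset.Icc k n
  have hcross : 0 ≤ ∑ j ∈ s, ∑ j' ∈ t, (P i j * P i' j' - P i j' * P i' j) := by
    apply Finset.sum_nonneg; intro j hj
    apply Finset.sum_nonneg; intro j' hj'
    rw [Finset.mem_Icc] at hj hj'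
    exact hTP2 i hi i' hi' j (by rw [Finset.mem_Icc]; omega)
      j' (by rw [Finset.mem_Icc]; omega) hii' (by omega)
  have hfact : (∑ j ∈ s, ∑ j' ∈ t, (P i j * P i' j' - P i j' * P i' j))
      = (∑ j ∈ s, P i j) * (∑ j' ∈ t, P i' j')
        - (∑ j' ∈ t, P i j') * (∑ j ∈ s, P i' j) := by
    rw [Finset.sum_mul_sum, Finset.sum_mul_sum]
    rw [Finset.sum_comm (s := t) (t := s)]
    rw [← Finset.sum_sub_distrib]
    apply Finset.sum_congr rfl; intro j _
    rw [← Finset.sum_sub_distrib]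
  rw [hfact] at hcross
  have h1 := hsplit i hi
  have h2 := hsplit i' hi'
  have hA : (∑ j ∈ s, P i j) = 1 - (∑ j ∈ t, P i j) := by linarith
  have hB : (∑ j ∈ s, P i' j) = 1 - (∑ j ∈ t, P i' j) := by linarith
  rw [hA, hB] at hcross
  nlinarith [hcross]

/-- Lemma 1 of the paper: a TP3 stochastic matrix whose conditional mean
`i ↦ ∑_j j P_{ij}` is nondecreasing and integer concave maps nondecreasing
integer-concave vectors to nondecreasing integer-concave vectors. -/
theorem stmt12 (n : ℕ) (hn : 1 ≤ n) (P : ℕ → ℕ → ℝ)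
    (hP1 : ∀ i ∈ Finset.Icc 1 n, (∑ j ∈ Finset.Icc 1 n, P i j) = 1)
    (hTP3 : IsTP3 n P)
    (hmean_mono : ∀ i ∈ Finset.Icc 1 n, ∀ i' ∈ Finset.Icc 1 n, i ≤ i' →
        (∑ j ∈ Finset.Icc 1 n, (j : ℝ) * P i j) ≤ ∑ j ∈ Finset.Icc 1 n, (j : ℝ) * P i' j)
    (hmean_conc : IntConcaveOn n (fun i => ∑ j ∈ Finset.Icc 1 n, (j : ℝ) * P i j))
    (V : ℕ → ℝ)
    (hVmono : ∀ j ∈ Finset.Icc 1 n, ∀ j' ∈ Finset.Icc 1 n, j ≤ j' → V j ≤ V j')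
    (hVconc : IntConcaveOn n V) :
    (∀ i ∈ Finset.Icc 1 n, ∀ i' ∈ Finset.Icc 1 n, i ≤ i' →
        (∑ j ∈ Finset.Icc 1 n, P i j * V j) ≤ ∑ j ∈ Finset.Icc 1 n, P i' j * V j) ∧
    IntConcaveOn n (fun i => ∑ j ∈ Finset.Icc 1 n, P i j * V j) := by
  obtain ⟨hPnn, hTP2, hTP3d⟩ := hTP3
  constructor
  · -- monotonicity
    intro i hi i' hi' hii'
    rcases eq_or_lt_of_le hii' with rfl | hlt
    · exact le_refl _
    have hR0 : (∑ j ∈ Finset.Icc 1 n, (P i' j - P i j)) = 0 := by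
      rw [Finset.sum_sub_distrib, hP1 i' hi', hP1 i hi]; ring
    have habel := abel_sum n (fun j => P i' j - P i j) V hR0
    have hsub : (∑ j ∈ Finset.Icc 1 n, (P i' j - P i j) * V j)
        = (∑ j ∈ Finset.Icc 1 n, P i' j * V j) - ∑ j ∈ Finset.Icc 1 n, P i j * V j := by
      rw [← Finset.sum_sub_distrib]
      exact Finset.sum_congr rfl (fun j _ => by ring)
    have hnn : 0 ≤ ∑ k ∈ Finset.Icc 2 n, (V k - V (k-1)) *
        (∑ j ∈ Finset.Icc k n, (P i' j - P i j)) := by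
      apply Finset.sum_nonneg
      intro k hk
      rw [Finset.mem_Icc] at hk
      apply mul_nonneg
      · have := hVmono (k-1) (Finset.mem_Icc.mpr ⟨by omega, by omega⟩)
          k (Finset.mem_Icc.mpr ⟨by omega, by omega⟩) (by omega)
        linarith
      · rw [Finset.sum_sub_distrib]
        have := tail_mono n P hP1 hTP2 hi hi' hlt hk.1 hk.2
        linarith
    linarith [habel, hsub, hnn]
  · -- concavity
    intro x hx2 hx1n
    simp only []
    set Q : ℕ → ℝ := fun j => P (x-1) j + P (x+1) j - 2 * P x j with hQd
    have hx0 : x - 1 ∈ Finset.Icc 1 n := Finset.mem_Icc.mpr ⟨by omega, by omega⟩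
    have hxm : x ∈ Finset.Icc 1 n := Finset.mem_Icc.mpr ⟨by omega, by omega⟩
    have hxp : x + 1 ∈ Finset.Icc 1 n := Finset.mem_Icc.mpr ⟨by omega, by omega⟩
    have expand : ∀ W : ℕ → ℝ, (∑ j ∈ Finset.Icc 1 n, Q j * W j)
        = (∑ j ∈ Finset.Icc 1 n, P (x-1) j * W j) + (∑ j ∈ Finset.Icc 1 n, P (x+1) j * W j)
          - 2 * ∑ j ∈ Finset.Icc 1 n, P x j * W j := by
      intro W
      rw [Finset.mul_sum, ← Finset.sum_add_distrib, ← Finset.sum_sub_distrib]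
      exact Finset.sum_congr rfl (fun j _ => by simp only [hQd]; ring)
    suffices hQV : (∑ j ∈ Finset.Icc 1 n, Q j * V j) ≤ 0 by
      have e := expand V
      linarith
    have hQ0 : (∑ j ∈ Finset.Icc 1 n, Q j) = 0 := by
      have e := expand (fun _ => 1)
      simp only [mul_one] at e
      rw [e, hP1 (x-1) hx0, hP1 (x+1) hxp, hP1 x hxm]; ring
    have hQmean : (∑ j ∈ Finset.Icc 1 n, Q j * (j:ℝ)) ≤ 0 := by
      have e := expand (fun j => (j:ℝ))
      have hm := hmean_conc x hx2 hx1n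
      simp only [] at hm
      have c1 : ∀ m : ℕ, (∑ j ∈ Finset.Icc 1 n, P m j * (j:ℝ))
          = ∑ j ∈ Finset.Icc 1 n, (j:ℝ) * P m j :=
        fun m => Finset.sum_congr rfl (fun j _ => mul_comm _ _)
      rw [e, c1, c1, c1]
      linarith
    have hVD : ∀ j₁ ∈ Finset.Icc 1 n, ∀ j₂ ∈ Finset.Icc 1 n, ∀ j₃ ∈ Finset.Icc 1 n,
        j₁ < j₂ → j₂ < j₃ → Q j₁ < 0 → 0 < Q j₂ → Q j₃ < 0 → False := by
      intro j₁ hj₁ j₂ hj₂ j₃ hj₃ h12 h23 hy1 hy2 hy3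
      have hxx : x - 1 < x := by omega
      have hxx' : x < x + 1 := by omega
      have hdet := hTP3d (x-1) hx0 x hxm (x+1) hxp j₁ hj₁ j₂ hj₂ j₃ hj₃ hxx hxx' h12 h23
      have hD : 0 ≤ (P (x-1) j₁)*((P x j₂)*(P (x+1) j₃) - (P x j₃)*(P (x+1) j₂))
          - (P (x-1) j₂)*((P x j₁)*(P (x+1) j₃) - (P x j₃)*(P (x+1) j₁))
          + (P (x-1) j₃)*((P x j₁)*(P (x+1) j₂) - (P x j₂)*(P (x+1) j₁)) := by
        simp [Matrix.det_fin_three] at hdet; linarith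
      simp only [hQd] at hy1 hy2 hy3
      exact vd_alg (P (x-1) j₁) (P (x-1) j₂) (P (x-1) j₃)
        (P x j₁) (P x j₂) (P x j₃)
        (P (x+1) j₁) (P (x+1) j₂) (P (x+1) j₃)
        (hPnn _ hx0 _ hj₁) (hPnn _ hx0 _ hj₂) (hPnn _ hxm _ hj₂)
        (hPnn _ hxp _ hj₁) (hPnn _ hxp _ hj₂)
        (hTP2 _ hx0 _ hxp _ hj₁ _ hj₂ (by omega) h12)
        (hTP2 _ hx0 _ hxp _ hj₁ _ hj₃ (by omega) (by omega))
        (hTP2 _ hx0 _ hxp _ hj₂ _ hj₃ (by omega) h23)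
        (hTP2 _ hxm _ hxp _ hj₂ _ hj₃ hxx' h23)
        (hTP2 _ hxm _ hxp _ hj₁ _ hj₃ hxx' (by omega))
        (hTP2 _ hxm _ hxp _ hj₁ _ hj₂ hxx' h12)
        (hTP2 _ hx0 _ hxm _ hj₂ _ hj₃ hxx h23)
        (hTP2 _ hx0 _ hxm _ hj₁ _ hj₃ hxx (by omega))
        (hTP2 _ hx0 _ hxm _ hj₁ _ hj₂ hxx h12)
        hD (by linarith) (by linarith) (by linarith)
    set N := (Finset.Icc 1 n).filter (fun j => Q j < 0) with hNd
    rcases N.eq_empty_or_nonempty with hN | hN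
    · have hnonneg : ∀ j ∈ Finset.Icc 1 n, 0 ≤ Q j := by
        intro j hj
        by_contra hc
        push_neg at hc
        have : j ∈ N := by rw [hNd, Finset.mem_filter]; exact ⟨hj, hc⟩
        rw [hN] at this; exact absurd this (Finset.notMem_empty j)
      have hz := (Finset.sum_eq_zero_iff_of_nonneg hnonneg).mp hQ0
      have : (∑ j ∈ Finset.Icc 1 n, Q j * V j) = 0 :=
        Finset.sum_eq_zero (fun j hj => by rw [hz j hj, zero_mul])
      linarith
    · set a := N.min' hN with had
      set b := N.max' hN with hbd
      have haN : a ∈ N := N.min'_mem hN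
      have hbN : b ∈ N := N.max'_mem hN
      have hamem : a ∈ Finset.Icc 1 n := (Finset.mem_filter.mp haN).1
      have hbmem : b ∈ Finset.Icc 1 n := (Finset.mem_filter.mp hbN).1
      have hQa : Q a < 0 := (Finset.mem_filter.mp haN).2
      have hQb : Q b < 0 := (Finset.mem_filter.mp hbN).2
      have hab : a ≤ b := N.min'_le b hbN
      have ha1 : 1 ≤ a := (Finset.mem_Icc.mp hamem).1
      have hbn : b ≤ n := (Finset.mem_Icc.mp hbmem).2
      set β : ℝ := if a < b then (V b - V a)/((b:ℝ) - (a:ℝ))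
        else if b < n then V (b+1) - V b else 0 with hβd
      have hβ : 0 ≤ β := by
        rw [hβd]
        split_ifs with h1 h2
        · apply div_nonneg
          · have := hVmono a hamem b hbmem hab; linarith
          · have : (a:ℝ) ≤ (b:ℝ) := by exact_mod_cast hab
            linarith
        · have := hVmono b hbmem (b+1) (Finset.mem_Icc.mpr ⟨by omega, by omega⟩) (by omega)
          linarith
        · exact le_refl 0
      have hterm : ∀ j ∈ Finset.Icc 1 n, Q j * (V j - (V b + β * ((j:ℝ) - (b:ℝ)))) ≤ 0 := by
        intro j hj
        have hj1 : 1 ≤ j := (Finset.mem_Icc.mp hj).1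
        have hjn : j ≤ n := (Finset.mem_Icc.mp hj).2
        rcases lt_trichotomy (Q j) 0 with hneg | hzero | hpos
        · -- j is in the negative block: a ≤ j ≤ b, V above the chord
          have hjN : j ∈ N := by rw [hNd, Finset.mem_filter]; exact ⟨hj, hneg⟩
          have haj : a ≤ j := N.min'_le j hjN
          have hjb : j ≤ b := N.le_max' j hjN
          apply mul_nonpos_of_nonpos_of_nonneg (le_of_lt hneg)
          rcases eq_or_lt_of_le hab with heq | haltb
          · have : j = b := by omega
            subst this
            simp
          · have hβeq : β = (V b - V a)/((b:ℝ) - (a:ℝ)) := by rw [hβd, if_pos haltb]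
            have hba : (0:ℝ) < (b:ℝ) - (a:ℝ) := by
              have : (a:ℝ) < (b:ℝ) := by exact_mod_cast haltb
              linarith
            have h := chord_mid hVconc ha1 haj hjb hbn
            rw [sub_nonneg, hβeq, div_mul_eq_mul_div, ← le_sub_iff_add_le', div_le_iff₀ hba]
            nlinarith [h]
        · rw [hzero, zero_mul]
        · -- positive Q j: j must lie outside [a,b], V below the chord
          have houtside : j < a ∨ b < j := by
            by_contra hc
            push_neg at hc
            have hne1 : j ≠ a := fun h => by rw [h] at hpos; linarith
            have hne2 : j ≠ b := fun h => by rw [h] at hpos; linarith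
            exact hVD a hamem j hj b hbmem (by omega) (by omega) hQa hpos hQb
          apply mul_nonpos_of_nonneg_of_nonpos (le_of_lt hpos)
          rw [sub_nonpos]
          rcases eq_or_lt_of_le hab with heq | haltb
          · -- a = b : tangent-type bound
            have hβeq : β = if b < n then V (b+1) - V b else 0 := by
              rw [hβd, if_neg (by omega : ¬ a < b)]
            rcases houtside with hja | hbj
            · -- j < a = b
              have hjb : j < b := by omega
              have hlow : ((b:ℝ) - (j:ℝ)) * β ≤ V b - V j := by
                apply sum_lower (le_of_lt hjb)
                intro k hk1 hk2
                by_cases hbn' : b < n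
                · rw [hβeq, if_pos hbn']
                  have := dV_antitone hVconc (p := k) (q := b+1) (by omega) (by omega) (by omega)
                  simpa using this
                · rw [hβeq, if_neg hbn']
                  have := hVmono (k-1) (Finset.mem_Icc.mpr ⟨by omega, by omega⟩)
                    k (Finset.mem_Icc.mpr ⟨by omega, by omega⟩) (by omega)
                  linarith
              nlinarith [hlow]
            · -- b < j, so b < n
              have hbn' : b < n := by omega
              have hupp : V j - V b ≤ ((j:ℝ) - (b:ℝ)) * β := by
                apply sum_upper (le_of_lt hbj)
                intro k hk1 hk2
                rw [hβeq, if_pos hbn']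
                have := dV_antitone hVconc (p := b+1) (q := k) (by omega) (by omega) (by omega)
                simpa using this
              nlinarith [hupp]
          · -- a < b : chord bounds outside [a,b]
            have hβeq : β = (V b - V a)/((b:ℝ) - (a:ℝ)) := by rw [hβd, if_pos haltb]
            have hba : (0:ℝ) < (b:ℝ) - (a:ℝ) := by
              have : (a:ℝ) < (b:ℝ) := by exact_mod_cast haltb
              linarith
            rw [hβeq, div_mul_eq_mul_div, ← sub_le_iff_le_add', le_div_iff₀ hba]
            rcases houtside with hja | hbj
            · nlinarith [chord_out_left hVconc hj1 hja haltb hbn]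
            · nlinarith [chord_out_right hVconc ha1 haltb hbj hjn]
      have key : (∑ j ∈ Finset.Icc 1 n, Q j * V j)
          = (∑ j ∈ Finset.Icc 1 n, Q j * (V j - (V b + β * ((j:ℝ) - (b:ℝ)))))
            + (V b - β*(b:ℝ)) * (∑ j ∈ Finset.Icc 1 n, Q j)
            + β * (∑ j ∈ Finset.Icc 1 n, Q j * (j:ℝ)) := by
        rw [Finset.mul_sum, Finset.mul_sum, ← Finset.sum_add_distrib, ← Finset.sum_add_distrib]
        exact Finset.sum_congr rfl (fun j _ => by ring)
      have h1 : (∑ j ∈ Finset.Icc 1 n, Q j * (V j - (V b + β * ((j:ℝ) - (b:ℝ))))) ≤ 0 :=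
        Finset.sum_nonpos hterm
      have h2 : β * (∑ j ∈ Finset.Icc 1 n, Q j * (j:ℝ)) ≤ 0 := by
        have := mul_le_mul_of_nonneg_left hQmean hβ
        simpa using this
      rw [key, hQ0, mul_zero, add_zero]
      linarith
end

section
/- Consider a finite-horizon cost-minimizing MDP on X = {1,...,n}, A = {1,...,m} satisfying: (C1) costs c(x,a) nondecreasing and integer concave in x; (C2) each P(a) is TP3 with ∑_j j P_{ij}(a) nondecreasing and integer concave in i; (C5) terminal cost t nondecreasing and integer concave. Then every value function V_k from the recursion V_N = t, Q_k(x,a) = c(x,a) + ∑_j P_{xj}(a)V_{k+1}(j), V_k = min_a Q_k(x,a), is nondecreasing and integer concave in x. -/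
section Helpers

open Finset

/-- Telescoping sum over `Ioc 1 n`. -/
lemma mdp_tele (W : ℕ → ℝ) : ∀ n : ℕ, 1 ≤ n → ∑ b ∈ Ioc 1 n, (W b - W (b-1)) = W n - W 1 := by
  intro n
  induction n with
  | zero => omega
  | succ n ih =>
    intro _
    rcases Nat.eq_zero_or_pos n with h | h
    · subst h; simp
    · rw [Finset.sum_Ioc_succ_top (by omega), ih h]
      simp only [Nat.add_sub_cancel]
      ring

/-- Abel summation. -/
lemma mdp_abel1 (S W : ℕ → ℝ) : ∀ n : ℕ,
    ∑ j ∈ Ioc 0 n, S j * W j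
      = W 1 * (∑ j ∈ Ioc 0 n, S j)
        + ∑ b ∈ Ioc 1 n, (W b - W (b-1)) * (∑ j ∈ Ioc (b-1) n, S j) := by
  intro n
  induction n with
  | zero => simp
  | succ n ih =>
    rw [Finset.sum_Ioc_succ_top (Nat.zero_le _), Finset.sum_Ioc_succ_top (Nat.zero_le _)]
    have hins : ∀ b ∈ Ioc 1 (n+1), (W b - W (b-1)) * (∑ j ∈ Ioc (b-1) (n+1), S j)
        = (W b - W (b-1)) * (∑ j ∈ Ioc (b-1) n, S j) + (W b - W (b-1)) * S (n+1) := by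
      intro b hb
      simp only [mem_Ioc] at hb
      rw [Finset.sum_Ioc_succ_top (by omega)]
      ring
    rw [Finset.sum_congr rfl hins, Finset.sum_add_distrib, ← Finset.sum_mul]
    rcases Nat.eq_zero_or_pos n with h | h
    · subst h; simp; ring
    · rw [mdp_tele W (n+1) (by omega), ih,
        Finset.sum_Ioc_succ_top (by omega : 1 ≤ n)]
      simp only [Nat.add_sub_cancel, Finset.Ioc_self, Finset.sum_empty]
      ring

/-- Abel summation from the top. -/
lemma mdp_abel2 (f g : ℕ → ℝ) : ∀ n : ℕ,
    ∑ b ∈ Ioc 1 n, f b * g b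
      = f n * (∑ b ∈ Ioc 1 n, g b)
        + ∑ c ∈ Ioc 1 (n-1), (f c - f (c+1)) * (∑ b ∈ Ioc 1 c, g b) := by
  intro n
  induction n with
  | zero => simp
  | succ n ih =>
    rcases Nat.lt_or_ge n 2 with h | h
    · interval_cases n
      · simp
      · rw [Finset.sum_Ioc_succ_top (le_refl 1), Finset.sum_Ioc_succ_top (le_refl 1)]
        simp
    · rw [Finset.sum_Ioc_succ_top (by omega : 1 ≤ n), Finset.sum_Ioc_succ_top (by omega : 1 ≤ n), ih]
      have h1 : n + 1 - 1 = (n-1) + 1 := by omega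
      rw [h1, Finset.sum_Ioc_succ_top (by omega : 1 ≤ n - 1)]
      have h2 : n - 1 + 1 = n := by omega
      rw [h2]
      ring

lemma mdp_Gid (S : ℕ → ℝ) : ∀ n : ℕ,
    ∑ b ∈ Ioc 1 n, (∑ j ∈ Ioc 0 (b-1), S j)
      = ∑ j ∈ Ioc 0 n, ((n:ℝ) - (j:ℝ)) * S j := by
  intro n
  induction n with
  | zero => simp
  | succ n ih =>
    rcases Nat.eq_zero_or_pos n with h | h
    · subst h; simp
    · rw [Finset.sum_Ioc_succ_top (by omega : 1 ≤ n), ih,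
        Finset.sum_Ioc_succ_top (Nat.zero_le n)]
      simp only [Nat.add_sub_cancel, Nat.cast_add, Nat.cast_one]
      have e : ∑ j ∈ Ioc 0 n, (((n:ℝ)+1) - (j:ℝ)) * S j
          = ∑ j ∈ Ioc 0 n, (((n:ℝ) - (j:ℝ)) * S j + S j) :=
        Finset.sum_congr rfl fun j _ => by ring
      rw [e, Finset.sum_add_distrib]
      ring

/-- Stochastic dominance from TP2 plus row sums one. -/
lemma mdp_Fdom (n : ℕ) (Pa : ℕ → ℕ → ℝ)
    (hrow : ∀ x ∈ Ioc 0 n, ∑ j ∈ Ioc 0 n, Pa x j = 1)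
    (htp2 : ∀ i ∈ Ioc 0 n, ∀ i' ∈ Ioc 0 n, ∀ j ∈ Ioc 0 n, ∀ j' ∈ Ioc 0 n,
        i < i' → j < j' → 0 ≤ Pa i j * Pa i' j' - Pa i j' * Pa i' j)
    (r r' : ℕ) (hr : r ∈ Ioc 0 n) (hr' : r' ∈ Ioc 0 n) (hrr : r < r')
    (b : ℕ) (hb : b ≤ n) :
    ∑ j ∈ Ioc 0 b, Pa r' j ≤ ∑ j ∈ Ioc 0 b, Pa r j := by
  have split : ∀ f : ℕ → ℝ, ∑ j' ∈ Ioc 0 n, f j'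
      = ∑ j' ∈ Ioc 0 b, f j' + ∑ j' ∈ Ioc b n, f j' :=
    fun f => (Finset.sum_Ioc_consecutive f (Nat.zero_le b) hb).symm
  have key : (∑ j ∈ Ioc 0 b, Pa r j) - (∑ j ∈ Ioc 0 b, Pa r' j)
      = ∑ j ∈ Ioc 0 b, ∑ j' ∈ Ioc b n, (Pa r j * Pa r' j' - Pa r j' * Pa r' j) := by
    have e0 : (∑ j ∈ Ioc 0 b, Pa r j) - (∑ j ∈ Ioc 0 b, Pa r' j)
        = (∑ j ∈ Ioc 0 b, Pa r j) * (∑ j' ∈ Ioc 0 n, Pa r' j')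
          - (∑ j ∈ Ioc 0 b, Pa r' j) * (∑ j' ∈ Ioc 0 n, Pa r j') := by
      rw [hrow r hr, hrow r' hr']; ring
    rw [e0, Finset.sum_mul_sum, Finset.sum_mul_sum]
    have e1 : ∀ (f : ℕ → ℕ → ℝ), ∑ j ∈ Ioc 0 b, ∑ j' ∈ Ioc 0 n, f j j'
        = ∑ j ∈ Ioc 0 b, ∑ j' ∈ Ioc 0 b, f j j' + ∑ j ∈ Ioc 0 b, ∑ j' ∈ Ioc b n, f j j' := by
      intro f
      rw [← Finset.sum_add_distrib]
      exact Finset.sum_congr rfl fun j _ => split (f j)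
    rw [e1, e1]
    have cancel : ∑ j ∈ Ioc 0 b, ∑ j' ∈ Ioc 0 b, Pa r' j * Pa r j'
        = ∑ j ∈ Ioc 0 b, ∑ j' ∈ Ioc 0 b, Pa r j * Pa r' j' := by
      rw [Finset.sum_comm]
      exact Finset.sum_congr rfl fun j _ => Finset.sum_congr rfl fun j' _ => mul_comm _ _
    rw [cancel]
    have e2 : ∑ j ∈ Ioc 0 b, ∑ j' ∈ Ioc b n, (Pa r j * Pa r' j' - Pa r j' * Pa r' j)
        = ∑ j ∈ Ioc 0 b, ∑ j' ∈ Ioc b n, Pa r j * Pa r' j'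
          - ∑ j ∈ Ioc 0 b, ∑ j' ∈ Ioc b n, Pa r' j * Pa r j' := by
      rw [← Finset.sum_sub_distrib]
      exact Finset.sum_congr rfl fun j _ => by
        rw [← Finset.sum_sub_distrib]
        exact Finset.sum_congr rfl fun j' _ => by ring
    rw [e2]
    ring
  have hnn : 0 ≤ (∑ j ∈ Ioc 0 b, Pa r j) - (∑ j ∈ Ioc 0 b, Pa r' j) := by
    rw [key]
    apply Finset.sum_nonneg
    intro j hj
    apply Finset.sum_nonneg
    intro j' hj'
    simp only [mem_Ioc] at hj hj'
    exact htp2 r hr r' hr' j (by simp only [mem_Ioc]; omega) j' (by simp only [mem_Ioc]; omega)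
      hrr (by omega)
  linarith

lemma mdp_tsum3 (s t u : Finset ℕ) (f g h : ℕ → ℝ) :
    ∑ x ∈ s, ∑ y ∈ t, ∑ z ∈ u, f x * g y * h z
      = (∑ x ∈ s, f x) * (∑ y ∈ t, g y) * (∑ z ∈ u, h z) := by
  rw [Finset.sum_mul, Finset.sum_mul]
  refine Finset.sum_congr rfl fun x _ => ?_
  rw [mul_assoc, Finset.sum_mul_sum, Finset.mul_sum]
  refine Finset.sum_congr rfl fun y _ => ?_
  rw [Finset.mul_sum]
  exact Finset.sum_congr rfl fun z _ => by ring

/-- The key TP3 consequence on cumulative differences. -/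
lemma mdp_tp3det (n : ℕ) (Pa : ℕ → ℕ → ℝ)
    (hrow : ∀ x ∈ Ioc 0 n, ∑ j ∈ Ioc 0 n, Pa x j = 1)
    (htp3 : ∀ i₁ ∈ Ioc 0 n, ∀ i₂ ∈ Ioc 0 n, ∀ i₃ ∈ Ioc 0 n,
      ∀ j₁ ∈ Ioc 0 n, ∀ j₂ ∈ Ioc 0 n, ∀ j₃ ∈ Ioc 0 n,
      i₁ < i₂ → i₂ < i₃ → j₁ < j₂ → j₂ < j₃ →
      0 ≤ Pa i₁ j₁ * Pa i₂ j₂ * Pa i₃ j₃ - Pa i₁ j₁ * Pa i₂ j₃ * Pa i₃ j₂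
        - Pa i₁ j₂ * Pa i₂ j₁ * Pa i₃ j₃ + Pa i₁ j₂ * Pa i₂ j₃ * Pa i₃ j₁
        + Pa i₁ j₃ * Pa i₂ j₁ * Pa i₃ j₂ - Pa i₁ j₃ * Pa i₂ j₂ * Pa i₃ j₁)
    (i : ℕ) (hi : 2 ≤ i) (hin : i + 1 ≤ n)
    (b0 b : ℕ) (hb0 : 1 ≤ b0) (hbb : b0 < b) (hbn : b < n) :
    0 ≤ ((∑ j ∈ Ioc 0 b0, Pa (i-1) j) - (∑ j ∈ Ioc 0 b0, Pa i j))
          * ((∑ j ∈ Ioc 0 b, Pa i j) - (∑ j ∈ Ioc 0 b, Pa (i+1) j))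
        - ((∑ j ∈ Ioc 0 b, Pa (i-1) j) - (∑ j ∈ Ioc 0 b, Pa i j))
          * ((∑ j ∈ Ioc 0 b0, Pa i j) - (∑ j ∈ Ioc 0 b0, Pa (i+1) j)) := by
  set r₁ := i - 1 with hr1
  set r₂ := i with hr2
  set r₃ := i + 1 with hr3
  set A := fun t => ∑ j ∈ Ioc 0 b0, Pa t j with hA
  set B := fun t => ∑ j ∈ Ioc b0 b, Pa t j with hB
  set Cc := fun t => ∑ j ∈ Ioc b n, Pa t j with hC
  have hmem : ∀ t : ℕ, 1 ≤ t → t ≤ n → t ∈ Ioc 0 n := by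
    intro t h1 h2; simp only [mem_Ioc]; omega
  have hsplit : ∀ t ∈ Ioc 0 n, A t + B t + Cc t = 1 := by
    intro t ht
    rw [← hrow t ht]
    rw [Finset.sum_Ioc_consecutive _ (Nat.zero_le b0) (le_of_lt hbb),
      Finset.sum_Ioc_consecutive _ (Nat.zero_le b) (le_of_lt hbn)]
  have hFb : ∀ t : ℕ, (∑ j ∈ Ioc 0 b, Pa t j) = A t + B t := by
    intro t
    rw [← Finset.sum_Ioc_consecutive _ (Nat.zero_le b0) (le_of_lt hbb)]
  have hE : 0 ≤ A r₁ * B r₂ * Cc r₃ - A r₁ * B r₃ * Cc r₂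
      - A r₂ * B r₁ * Cc r₃ + A r₃ * B r₁ * Cc r₂
      + A r₂ * B r₃ * Cc r₁ - A r₃ * B r₂ * Cc r₁ := by
    have key : A r₁ * B r₂ * Cc r₃ - A r₁ * B r₃ * Cc r₂
        - A r₂ * B r₁ * Cc r₃ + A r₃ * B r₁ * Cc r₂
        + A r₂ * B r₃ * Cc r₁ - A r₃ * B r₂ * Cc r₁
        = ∑ j₁ ∈ Ioc 0 b0, ∑ j₂ ∈ Ioc b0 b, ∑ j₃ ∈ Ioc b n,
            (Pa r₁ j₁ * Pa r₂ j₂ * Pa r₃ j₃ - Pa r₁ j₁ * Pa r₂ j₃ * Pa r₃ j₂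
              - Pa r₁ j₂ * Pa r₂ j₁ * Pa r₃ j₃ + Pa r₁ j₂ * Pa r₂ j₃ * Pa r₃ j₁
              + Pa r₁ j₃ * Pa r₂ j₁ * Pa r₃ j₂ - Pa r₁ j₃ * Pa r₂ j₂ * Pa r₃ j₁) := by
      have e : ∀ j₁ j₂ j₃ : ℕ,
          (Pa r₁ j₁ * Pa r₂ j₂ * Pa r₃ j₃ - Pa r₁ j₁ * Pa r₂ j₃ * Pa r₃ j₂
            - Pa r₁ j₂ * Pa r₂ j₁ * Pa r₃ j₃ + Pa r₁ j₂ * Pa r₂ j₃ * Pa r₃ j₁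
            + Pa r₁ j₃ * Pa r₂ j₁ * Pa r₃ j₂ - Pa r₁ j₃ * Pa r₂ j₂ * Pa r₃ j₁)
          = Pa r₁ j₁ * Pa r₂ j₂ * Pa r₃ j₃ - Pa r₁ j₁ * Pa r₃ j₂ * Pa r₂ j₃
            - Pa r₂ j₁ * Pa r₁ j₂ * Pa r₃ j₃ + Pa r₃ j₁ * Pa r₁ j₂ * Pa r₂ j₃
            + Pa r₂ j₁ * Pa r₃ j₂ * Pa r₁ j₃ - Pa r₃ j₁ * Pa r₂ j₂ * Pa r₁ j₃ := by
        intro j₁ j₂ j₃; ring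
      simp only [e]
      simp only [Finset.sum_sub_distrib, Finset.sum_add_distrib]
      rw [mdp_tsum3, mdp_tsum3, mdp_tsum3, mdp_tsum3, mdp_tsum3, mdp_tsum3]
      try ring
    rw [key]
    apply Finset.sum_nonneg; intro j₁ hj₁
    apply Finset.sum_nonneg; intro j₂ hj₂
    apply Finset.sum_nonneg; intro j₃ hj₃
    simp only [mem_Ioc] at hj₁ hj₂ hj₃
    exact htp3 r₁ (hmem _ (by omega) (by omega)) r₂ (hmem _ (by omega) (by omega))
      r₃ (hmem _ (by omega) (by omega))
      j₁ (hmem _ (by omega) (by omega)) j₂ (hmem _ (by omega) (by omega))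
      j₃ (hmem _ (by omega) (by omega))
      (by omega) (by omega) (by omega) (by omega)
  have c1 : Cc r₁ = 1 - A r₁ - B r₁ := by
    have := hsplit r₁ (hmem _ (by omega) (by omega)); linarith
  have c2 : Cc r₂ = 1 - A r₂ - B r₂ := by
    have := hsplit r₂ (hmem _ (by omega) (by omega)); linarith
  have c3 : Cc r₃ = 1 - A r₃ - B r₃ := by
    have := hsplit r₃ (hmem _ (by omega) (by omega)); linarith
  rw [c1, c2, c3] at hE
  rw [hFb, hFb, hFb]
  show (0:ℝ) ≤ (A r₁ - A r₂) * ((A r₂ + B r₂) - (A r₃ + B r₃))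
      - ((A r₁ + B r₁) - (A r₂ + B r₂)) * (A r₂ - A r₃)
  nlinarith [hE]

/-- TP2 + monotone W: expectation is monotone in the row. -/
lemma mdp_gmono (n : ℕ) (Pa : ℕ → ℕ → ℝ)
    (hrow : ∀ x ∈ Ioc 0 n, ∑ j ∈ Ioc 0 n, Pa x j = 1)
    (htp2 : ∀ i ∈ Ioc 0 n, ∀ i' ∈ Ioc 0 n, ∀ j ∈ Ioc 0 n, ∀ j' ∈ Ioc 0 n,
        i < i' → j < j' → 0 ≤ Pa i j * Pa i' j' - Pa i j' * Pa i' j)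
    (W : ℕ → ℝ)
    (hWmono : ∀ x ∈ Ioc 0 n, ∀ x' ∈ Ioc 0 n, x ≤ x' → W x ≤ W x')
    (x x' : ℕ) (hx : x ∈ Ioc 0 n) (hx' : x' ∈ Ioc 0 n) (hxx : x < x') :
    ∑ j ∈ Ioc 0 n, Pa x j * W j ≤ ∑ j ∈ Ioc 0 n, Pa x' j * W j := by
  set S := fun j => Pa x' j - Pa x j with hS
  have hmem : ∀ t : ℕ, 1 ≤ t → t ≤ n → t ∈ Ioc 0 n := by
    intro t h1 h2; simp only [mem_Ioc]; omega
  simp only [mem_Ioc] at hx hx'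
  have hSsum : ∑ j ∈ Ioc 0 n, S j = 0 := by
    simp only [hS]
    rw [Finset.sum_sub_distrib, hrow x' (hmem _ hx'.1 hx'.2), hrow x (hmem _ hx.1 hx.2)]
    ring
  have key : ∑ j ∈ Ioc 0 n, S j * W j
      = ∑ b ∈ Ioc 1 n, (W b - W (b-1)) * (∑ j ∈ Ioc (b-1) n, S j) := by
    rw [mdp_abel1, hSsum]; ring
  have hnn : 0 ≤ ∑ j ∈ Ioc 0 n, S j * W j := by
    rw [key]
    apply Finset.sum_nonneg
    intro b hb
    simp only [mem_Ioc] at hb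
    apply mul_nonneg
    · have := hWmono (b-1) (hmem _ (by omega) (by omega)) b (hmem _ (by omega) (by omega))
        (by omega)
      linarith
    · have f1 : (∑ j ∈ Ioc 0 (b-1), Pa x j) + (∑ j ∈ Ioc (b-1) n, Pa x j)
          = ∑ j ∈ Ioc 0 n, Pa x j :=
        Finset.sum_Ioc_consecutive _ (Nat.zero_le _) (by omega)
      have f2 : (∑ j ∈ Ioc 0 (b-1), Pa x' j) + (∑ j ∈ Ioc (b-1) n, Pa x' j)
          = ∑ j ∈ Ioc 0 n, Pa x' j :=
        Finset.sum_Ioc_consecutive _ (Nat.zero_le _) (by omega)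
      rw [hrow x (hmem _ hx.1 hx.2)] at f1
      rw [hrow x' (hmem _ hx'.1 hx'.2)] at f2
      have fd := mdp_Fdom n Pa hrow htp2 x x' (hmem _ hx.1 hx.2) (hmem _ hx'.1 hx'.2) hxx
        (b-1) (by omega)
      simp only [hS]
      rw [Finset.sum_sub_distrib]
      linarith
  have expand : ∑ j ∈ Ioc 0 n, S j * W j
      = ∑ j ∈ Ioc 0 n, Pa x' j * W j - ∑ j ∈ Ioc 0 n, Pa x j * W j := by
    rw [← Finset.sum_sub_distrib]
    exact Finset.sum_congr rfl fun j _ => by simp only [hS]; ring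
  linarith [expand ▸ hnn]

/-- TP3 + concave means: expectation of a nondecreasing concave function is concave. -/
lemma mdp_gconc (n : ℕ) (Pa : ℕ → ℕ → ℝ)
    (hrow : ∀ x ∈ Ioc 0 n, ∑ j ∈ Ioc 0 n, Pa x j = 1)
    (htp2 : ∀ i ∈ Ioc 0 n, ∀ i' ∈ Ioc 0 n, ∀ j ∈ Ioc 0 n, ∀ j' ∈ Ioc 0 n,
        i < i' → j < j' → 0 ≤ Pa i j * Pa i' j' - Pa i j' * Pa i' j)
    (htp3 : ∀ i₁ ∈ Ioc 0 n, ∀ i₂ ∈ Ioc 0 n, ∀ i₃ ∈ Ioc 0 n,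
      ∀ j₁ ∈ Ioc 0 n, ∀ j₂ ∈ Ioc 0 n, ∀ j₃ ∈ Ioc 0 n,
      i₁ < i₂ → i₂ < i₃ → j₁ < j₂ → j₂ < j₃ →
      0 ≤ Pa i₁ j₁ * Pa i₂ j₂ * Pa i₃ j₃ - Pa i₁ j₁ * Pa i₂ j₃ * Pa i₃ j₂
        - Pa i₁ j₂ * Pa i₂ j₁ * Pa i₃ j₃ + Pa i₁ j₂ * Pa i₂ j₃ * Pa i₃ j₁
        + Pa i₁ j₃ * Pa i₂ j₁ * Pa i₃ j₂ - Pa i₁ j₃ * Pa i₂ j₂ * Pa i₃ j₁)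
    (i : ℕ) (hi : 2 ≤ i) (hin : i + 1 ≤ n)
    (hmean : (∑ j ∈ Ioc 0 n, (j:ℝ) * Pa (i+1) j) - (∑ j ∈ Ioc 0 n, (j:ℝ) * Pa i j)
        ≤ (∑ j ∈ Ioc 0 n, (j:ℝ) * Pa i j) - (∑ j ∈ Ioc 0 n, (j:ℝ) * Pa (i-1) j))
    (W : ℕ → ℝ)
    (hWmono : ∀ x ∈ Ioc 0 n, ∀ x' ∈ Ioc 0 n, x ≤ x' → W x ≤ W x')
    (hWconc : ∀ x, 2 ≤ x → x + 1 ≤ n → W (x+1) - W x ≤ W x - W (x-1)) :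
    (∑ j ∈ Ioc 0 n, Pa (i+1) j * W j) - (∑ j ∈ Ioc 0 n, Pa i j * W j)
      ≤ (∑ j ∈ Ioc 0 n, Pa i j * W j) - (∑ j ∈ Ioc 0 n, Pa (i-1) j * W j) := by
  have hmem : ∀ t : ℕ, 1 ≤ t → t ≤ n → t ∈ Ioc 0 n := by
    intro t h1 h2; simp only [mem_Ioc]; omega
  set S := fun j => Pa (i-1) j + Pa (i+1) j - 2 * Pa i j with hSdef
  set C := fun d => ∑ j ∈ Ioc 0 d, S j with hCdef
  set R := fun b => ∑ j ∈ Ioc (b-1) n, S j with hRdef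
  have hSsum : C n = 0 := by
    simp only [hCdef, hSdef]
    have e : ∑ j ∈ Ioc 0 n, (Pa (i-1) j + Pa (i+1) j - 2 * Pa i j)
        = (∑ j ∈ Ioc 0 n, Pa (i-1) j) + (∑ j ∈ Ioc 0 n, Pa (i+1) j)
          - 2 * (∑ j ∈ Ioc 0 n, Pa i j) := by
      rw [Finset.sum_sub_distrib, Finset.sum_add_distrib, Finset.mul_sum]
    rw [e, hrow _ (hmem (i-1) (by omega) (by omega)), hrow _ (hmem i (by omega) (by omega)),
      hrow _ (hmem (i+1) (by omega) (by omega))]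
    ring
  have hjS : ∑ j ∈ Ioc 0 n, (j:ℝ) * S j ≤ 0 := by
    have e : ∑ j ∈ Ioc 0 n, (j:ℝ) * S j
        = (∑ j ∈ Ioc 0 n, (j:ℝ) * Pa (i-1) j) + (∑ j ∈ Ioc 0 n, (j:ℝ) * Pa (i+1) j)
          - 2 * (∑ j ∈ Ioc 0 n, (j:ℝ) * Pa i j) := by
      rw [Finset.mul_sum, ← Finset.sum_add_distrib, ← Finset.sum_sub_distrib]
      exact Finset.sum_congr rfl fun j _ => by simp only [hSdef]; ring
    rw [e]; linarith
  have hRC : ∀ b, 1 ≤ b → b ≤ n → R b = -C (b-1) := by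
    intro b h1 h2
    have := Finset.sum_Ioc_consecutive S (Nat.zero_le (b-1)) (by omega : b-1 ≤ n)
    simp only [hRdef, hCdef] at *
    linarith [hSsum, this]
  have hGn : 0 ≤ ∑ b ∈ Ioc 1 n, C (b-1) := by
    have e := mdp_Gid S n
    simp only [hCdef]
    rw [e]
    have e2 : ∑ j ∈ Ioc 0 n, ((n:ℝ) - (j:ℝ)) * S j
        = (n:ℝ) * (∑ j ∈ Ioc 0 n, S j) - ∑ j ∈ Ioc 0 n, (j:ℝ) * S j := by
      rw [Finset.mul_sum, ← Finset.sum_sub_distrib]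
      exact Finset.sum_congr rfl fun j _ => by ring
    rw [e2]
    have h0 : (∑ j ∈ Ioc 0 n, S j) = 0 := hSsum
    rw [h0]
    linarith
  have hsc : ∀ b0, 1 ≤ b0 → b0 ≤ n → C b0 < 0 → ∀ d, b0 ≤ d → d ≤ n → C d ≤ 0 := by
    intro b0 h1 h2 hneg d hd1 hd2
    rcases eq_or_lt_of_le hd1 with rfl | hlt
    · exact le_of_lt hneg
    rcases eq_or_lt_of_le hd2 with rfl | hdn
    · exact le_of_eq hSsum
    have hCuv : ∀ e : ℕ, C e = ((∑ j ∈ Ioc 0 e, Pa (i-1) j) - (∑ j ∈ Ioc 0 e, Pa i j))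
        - ((∑ j ∈ Ioc 0 e, Pa i j) - (∑ j ∈ Ioc 0 e, Pa (i+1) j)) := by
      intro e
      simp only [hCdef, hSdef]
      rw [← Finset.sum_sub_distrib, ← Finset.sum_sub_distrib, ← Finset.sum_sub_distrib]
      exact Finset.sum_congr rfl fun j _ => by ring
    have hu0 := mdp_Fdom n Pa hrow htp2 (i-1) i (hmem _ (by omega) (by omega))
      (hmem _ (by omega) (by omega)) (by omega) b0 (by omega)
    have hv0 := mdp_Fdom n Pa hrow htp2 i (i+1) (hmem _ (by omega) (by omega))
      (hmem _ (by omega) (by omega)) (by omega) b0 (by omega)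
    have hud := mdp_Fdom n Pa hrow htp2 (i-1) i (hmem _ (by omega) (by omega))
      (hmem _ (by omega) (by omega)) (by omega) d (by omega)
    have hvd := mdp_Fdom n Pa hrow htp2 i (i+1) (hmem _ (by omega) (by omega))
      (hmem _ (by omega) (by omega)) (by omega) d (by omega)
    have hdet := mdp_tp3det n Pa hrow htp3 i hi hin b0 d h1 hlt hdn
    have h0 := hCuv b0
    have hdd := hCuv d
    rw [h0] at hneg
    rw [hdd]
    nlinarith [hneg, hdet, hu0, hv0, hud, hvd]
  have hGc : ∀ cc, 1 ≤ cc → cc ≤ n → 0 ≤ ∑ b ∈ Ioc 1 cc, C (b-1) := by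
    intro cc h1 h2
    by_cases hneg : ∃ b0, 1 ≤ b0 ∧ b0 < cc ∧ C b0 < 0
    · obtain ⟨b0, hb01, hb02, hb03⟩ := hneg
      have hsplit := Finset.sum_Ioc_consecutive (fun b => C (b-1)) h1 h2
      have htail : ∑ b ∈ Ioc cc n, C (b-1) ≤ 0 := by
        apply Finset.sum_nonpos
        intro b hb
        simp only [mem_Ioc] at hb
        exact hsc b0 hb01 (by omega) hb03 (b-1) (by omega) (by omega)
      linarith [hGn, hsplit, htail]
    · push_neg at hneg
      apply Finset.sum_nonneg
      intro b hb
      simp only [mem_Ioc] at hb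
      exact hneg (b-1) (by omega) (by omega)
  have key : ∑ j ∈ Ioc 0 n, S j * W j ≤ 0 := by
    rw [mdp_abel1 S W n]
    have h0 : (∑ j ∈ Ioc 0 n, S j) = 0 := hSsum
    rw [h0, mdp_abel2 (fun b => W b - W (b-1)) R n]
    have hRn : ∑ b ∈ Ioc 1 n, R b = -(∑ b ∈ Ioc 1 n, C (b-1)) := by
      rw [← Finset.sum_neg_distrib]
      exact Finset.sum_congr rfl fun b hb => by
        simp only [mem_Ioc] at hb; exact hRC b (by omega) hb.2
    have t1 : (W n - W (n-1)) * (∑ b ∈ Ioc 1 n, R b) ≤ 0 := by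
      rw [hRn]
      have hdlt : 0 ≤ W n - W (n-1) := by
        have := hWmono (n-1) (hmem _ (by omega) (by omega)) n (hmem _ (by omega) (by omega))
          (by omega)
        linarith
      nlinarith [hGn]
    have t2 : ∑ cc ∈ Ioc 1 (n-1), ((W cc - W (cc-1)) - (W (cc+1) - W (cc+1-1)))
        * (∑ b ∈ Ioc 1 cc, R b) ≤ 0 := by
      apply Finset.sum_nonpos
      intro cc hcc
      simp only [mem_Ioc] at hcc
      have hRcc : ∑ b ∈ Ioc 1 cc, R b = -(∑ b ∈ Ioc 1 cc, C (b-1)) := by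
        rw [← Finset.sum_neg_distrib]
        exact Finset.sum_congr rfl fun b hb => by
          simp only [mem_Ioc] at hb; exact hRC b (by omega) (by omega)
      rw [hRcc]
      have hγ : 0 ≤ (W cc - W (cc-1)) - (W (cc+1) - W (cc+1-1)) := by
        have := hWconc cc (by omega) (by omega)
        simp only [Nat.add_sub_cancel]
        linarith
      nlinarith [hGc cc (by omega) (by omega)]
    linarith [t1, t2]
  have expand : ∑ j ∈ Ioc 0 n, S j * W j
      = (∑ j ∈ Ioc 0 n, Pa (i-1) j * W j) + (∑ j ∈ Ioc 0 n, Pa (i+1) j * W j)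
        - 2 * (∑ j ∈ Ioc 0 n, Pa i j * W j) := by
    rw [Finset.mul_sum, ← Finset.sum_add_distrib, ← Finset.sum_sub_distrib]
    exact Finset.sum_congr rfl fun j _ => by simp only [hSdef]; ring
  linarith [expand ▸ key]

end Helpers

/-- Finite-horizon cost MDP with (C1),(C2),(C5): every value function `V_k` is
nondecreasing and integer concave in the state. -/
theorem stmt13 (n m N : ℕ) (hn : 1 ≤ n) (hm : 1 ≤ m)
    (c : ℕ → ℕ → ℝ) (P : ℕ → ℕ → ℕ → ℝ) (t : ℕ → ℝ)
    (hP1 : ∀ a ∈ Finset.Icc 1 m, ∀ x ∈ Finset.Icc 1 n, (∑ j ∈ Finset.Icc 1 n, P a x j) = 1)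
    -- (C1) costs nondecreasing and integer concave in the state
    (hC1mono : ∀ a ∈ Finset.Icc 1 m, ∀ x ∈ Finset.Icc 1 n, ∀ x' ∈ Finset.Icc 1 n,
        x ≤ x' → c x a ≤ c x' a)
    (hC1conc : ∀ a ∈ Finset.Icc 1 m, IntConcaveOn n (fun x => c x a))
    -- (C2) TP3 transition matrices with nondecreasing integer-concave conditional means
    (hC2tp3 : ∀ a ∈ Finset.Icc 1 m, IsTP3 n (P a))
    (hC2mono : ∀ a ∈ Finset.Icc 1 m, ∀ i ∈ Finset.Icc 1 n, ∀ i' ∈ Finset.Icc 1 n, i ≤ i' →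
        (∑ j ∈ Finset.Icc 1 n, (j : ℝ) * P a i j) ≤ ∑ j ∈ Finset.Icc 1 n, (j : ℝ) * P a i' j)
    (hC2conc : ∀ a ∈ Finset.Icc 1 m,
        IntConcaveOn n (fun i => ∑ j ∈ Finset.Icc 1 n, (j : ℝ) * P a i j))
    -- (C5) terminal cost nondecreasing and integer concave
    (hC5mono : ∀ x ∈ Finset.Icc 1 n, ∀ x' ∈ Finset.Icc 1 n, x ≤ x' → t x ≤ t x')
    (hC5conc : IntConcaveOn n t)
    -- Bellman backward recursion (cost minimization)
    (V : ℕ → ℕ → ℝ) (Q : ℕ → ℕ → ℕ → ℝ)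
    (hVN : ∀ x, V N x = t x)
    (hQ : ∀ k < N, ∀ x a,
        Q k x a = c x a + ∑ j ∈ Finset.Icc 1 n, P a x j * V (k + 1) j)
    (hV : ∀ k < N, ∀ x, IsLeast ((fun a => Q k x a) '' ↑(Finset.Icc 1 m)) (V k x)) :
    ∀ k ≤ N, (∀ x ∈ Finset.Icc 1 n, ∀ x' ∈ Finset.Icc 1 n, x ≤ x' → V k x ≤ V k x') ∧
      IntConcaveOn n (V k) := by
  open Finset in
  have hIcc : Finset.Icc 1 n = Finset.Ioc 0 n := Finset.Icc_add_one_left_eq_Ioc 0 n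
  have hmemIoc : ∀ t : ℕ, 1 ≤ t → t ≤ n → t ∈ Finset.Ioc 0 n := by
    intro t h1 h2; simp only [Finset.mem_Ioc]; omega
  have hmemIcc : ∀ t : ℕ, 1 ≤ t → t ≤ n → t ∈ Finset.Icc 1 n := by
    intro t h1 h2; simp only [Finset.mem_Icc]; omega
  have hIoc2Icc : ∀ t : ℕ, t ∈ Finset.Ioc 0 n → t ∈ Finset.Icc 1 n := by
    intro t ht; rw [hIcc]; exact ht
  have hIcc2Ioc : ∀ t : ℕ, t ∈ Finset.Icc 1 n → t ∈ Finset.Ioc 0 n := by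
    intro t ht; rw [← hIcc]; exact ht
  have hrow : ∀ a ∈ Finset.Icc 1 m, ∀ x ∈ Finset.Ioc 0 n,
      ∑ j ∈ Finset.Ioc 0 n, P a x j = 1 := by
    intro a ha x hx
    rw [← hIcc]; exact hP1 a ha x (hIoc2Icc x hx)
  have htp2 : ∀ a ∈ Finset.Icc 1 m, ∀ i ∈ Finset.Ioc 0 n, ∀ i' ∈ Finset.Ioc 0 n,
      ∀ j ∈ Finset.Ioc 0 n, ∀ j' ∈ Finset.Ioc 0 n, i < i' → j < j' →
      0 ≤ P a i j * P a i' j' - P a i j' * P a i' j := by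
    intro a ha i hi i' hi' j hj j' hj'
    exact (hC2tp3 a ha).2.1 i (hIoc2Icc i hi) i' (hIoc2Icc i' hi') j (hIoc2Icc j hj)
      j' (hIoc2Icc j' hj')
  have htp3 : ∀ a ∈ Finset.Icc 1 m, ∀ i₁ ∈ Finset.Ioc 0 n, ∀ i₂ ∈ Finset.Ioc 0 n,
      ∀ i₃ ∈ Finset.Ioc 0 n, ∀ j₁ ∈ Finset.Ioc 0 n, ∀ j₂ ∈ Finset.Ioc 0 n,
      ∀ j₃ ∈ Finset.Ioc 0 n,
      i₁ < i₂ → i₂ < i₃ → j₁ < j₂ → j₂ < j₃ →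
      0 ≤ P a i₁ j₁ * P a i₂ j₂ * P a i₃ j₃ - P a i₁ j₁ * P a i₂ j₃ * P a i₃ j₂
        - P a i₁ j₂ * P a i₂ j₁ * P a i₃ j₃ + P a i₁ j₂ * P a i₂ j₃ * P a i₃ j₁
        + P a i₁ j₃ * P a i₂ j₁ * P a i₃ j₂ - P a i₁ j₃ * P a i₂ j₂ * P a i₃ j₁ := by
    intro a ha i₁ h1 i₂ h2 i₃ h3 j₁ g1 j₂ g2 j₃ g3 o1 o2 o3 o4
    have := (hC2tp3 a ha).2.2 i₁ (hIoc2Icc _ h1) i₂ (hIoc2Icc _ h2) i₃ (hIoc2Icc _ h3)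
      j₁ (hIoc2Icc _ g1) j₂ (hIoc2Icc _ g2) j₃ (hIoc2Icc _ g3) o1 o2 o3 o4
    rw [Matrix.det_fin_three] at this
    simpa using this
  suffices H : ∀ d k, k + d = N →
      (∀ x ∈ Finset.Icc 1 n, ∀ x' ∈ Finset.Icc 1 n, x ≤ x' → V k x ≤ V k x') ∧
      IntConcaveOn n (V k) by
    intro k hk; exact H (N - k) k (by omega)
  intro d
  induction d with
  | zero =>
    intro k hk
    have hkN : k = N := by omega
    subst hkN
    constructor
    · intro x hx x' hx' hxx; rw [hVN, hVN]; exact hC5mono x hx x' hx' hxx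
    · intro x h1 h2; rw [hVN, hVN, hVN]; exact hC5conc x h1 h2
  | succ d ih =>
    intro k hk
    have hkN : k < N := by omega
    obtain ⟨Wmono, Wconc⟩ := ih (k+1) (by omega)
    have WmonoI : ∀ y ∈ Finset.Ioc 0 n, ∀ y' ∈ Finset.Ioc 0 n, y ≤ y' →
        V (k+1) y ≤ V (k+1) y' := by
      intro y hy y' hy' h
      exact Wmono y (hIoc2Icc _ hy) y' (hIoc2Icc _ hy') h
    -- Q is nondecreasing in the state
    have Qmono : ∀ a ∈ Finset.Icc 1 m, ∀ x ∈ Finset.Icc 1 n, ∀ x' ∈ Finset.Icc 1 n,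
        x ≤ x' → Q k x a ≤ Q k x' a := by
      intro a ha x hx x' hx' hxx
      rw [hQ k hkN x a, hQ k hkN x' a, hIcc]
      rcases eq_or_lt_of_le hxx with rfl | hlt
      · exact le_refl _
      · have hg := mdp_gmono n (P a) (hrow a ha) (htp2 a ha) (V (k+1)) WmonoI
          x x' (hIcc2Ioc _ hx) (hIcc2Ioc _ hx') hlt
        have hc := hC1mono a ha x hx x' hx' hxx
        linarith
    -- Q is integer concave in the state
    have Qconc : ∀ a ∈ Finset.Icc 1 m, ∀ x, 2 ≤ x → x + 1 ≤ n →
        Q k (x+1) a - Q k x a ≤ Q k x a - Q k (x-1) a := by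
      intro a ha x h2 hn1
      rw [hQ k hkN (x+1) a, hQ k hkN x a, hQ k hkN (x-1) a, hIcc]
      have hmean : (∑ j ∈ Finset.Ioc 0 n, (j:ℝ) * P a (x+1) j)
          - (∑ j ∈ Finset.Ioc 0 n, (j:ℝ) * P a x j)
          ≤ (∑ j ∈ Finset.Ioc 0 n, (j:ℝ) * P a x j)
            - (∑ j ∈ Finset.Ioc 0 n, (j:ℝ) * P a (x-1) j) := by
        rw [← hIcc]
        exact hC2conc a ha x h2 hn1
      have hg := mdp_gconc n (P a) (hrow a ha) (htp2 a ha) (htp3 a ha) x h2 hn1 hmean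
        (V (k+1)) WmonoI Wconc
      have hc := hC1conc a ha x h2 hn1
      simp only at hc
      linarith
    constructor
    · -- monotone
      intro x hx x' hx' hxx
      obtain ⟨a', ha', haq⟩ := (hV k hkN x').1
      have ham : a' ∈ Finset.Icc 1 m := Finset.mem_coe.mp ha'
      have h1 : V k x ≤ Q k x a' := (hV k hkN x).2 ⟨a', ha', rfl⟩
      have h2 : Q k x a' ≤ Q k x' a' := Qmono a' ham x hx x' hx' hxx
      simp only at haq
      linarith [haq ▸ (le_trans h1 h2)]
    · -- concave
      intro x h2 hn1
      obtain ⟨a', ha', haq⟩ := (hV k hkN x).1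
      have ham : a' ∈ Finset.Icc 1 m := Finset.mem_coe.mp ha'
      have hu : V k (x+1) ≤ Q k (x+1) a' := (hV k hkN (x+1)).2 ⟨a', ha', rfl⟩
      have hd : V k (x-1) ≤ Q k (x-1) a' := (hV k hkN (x-1)).2 ⟨a', ha', rfl⟩
      have hqc := Qconc a' ham x h2 hn1
      simp only at haq
      linarith [haq]
end
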